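/- arXiv:2511.23008 — 10 statements merged into one kernel-verified Lean document; each statement's English description precedes it below -/
import Mathlib

section
/- Let E be a separable real Hilbert space, (P_l)_{l∈ℕ} orthogonal projections on E with P_l ∘ P_{l'} = 0 for l ≠ l' and Σ_l P_l f = f for every f ∈ E, and (b_l)_{l∈ℕ} bounded self-adjoint positive injective operators on E with sup_l ‖b_l‖ < ∞ and b_l ∘ P_{l'} = P_{l'} ∘ b_l for all l, l'. Let B^{1/2} denote the bounded operator f ↦ Σ_l √(b_l)(P_l f), where √(b_l) is the unique positive square root of b_l. Then for u ∈ E the following are equivalent: (i) u lies in the range of B^{1/2}; (ii) there exists a sequence (v_l) with v_l in the range of P_l, √(b_l) v_l = P_l u for every l, and Σ_l ‖v_l‖² < ∞. Moreover, in that case the element f := Σ_l v_l satisfies B^{1/2} f = u, i.e. the (unbounded) inverse B^{-1/2} satisfies B^{-1/2} u = Σ_l v_l. -/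
/-!
The whole difficulty is that each `P l'` commutes with the square root `s l`, knowing only that
it commutes with `b l = s l ^ 2`. For `U = 2 P - 1`, a self-adjoint involution commuting with
`s ^ 2`, the operator `U s U` is another positive square root of `s ^ 2`, hence equals `s` by
uniqueness of positive square roots. Uniqueness follows Riesz: commuting positive operators have a
positive product (scale to `0 ≤ A ≤ 1` and write `A = ∑ k < n, D k ^ 2 + D n` for the iterates
`D ↦ D - D ^ 2`, which stay in `[0, 1]` and tend strongly to `0`), and if `s ^ 2 = t ^ 2` then `s + t` and `s - t` anticommute, which forces
`(s + t) (s - t) = 0` and then `s = t`.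

Once `s l` commutes with every projection, `Bhalf` is diagonal, `P l (Bhalf g) = s l (P l g)`,
and `∑ v l` with `v l ∈ range (P l)` converges exactly when `∑ ‖v l‖ ^ 2` does.
-/

open RealInnerProductSpace Filter Topology

theorem sum_range_mul_self_add_eq_of_eq_sub_mul_self {R : Type*} [Ring R] {D : ℕ → R}
    (hD : ∀ n, D (n + 1) = D n - D n * D n) (n : ℕ) :
    ∑ k ∈ Finset.range n, D k * D k + D n = D 0 := by
  induction n with
  | zero => simp
  | succ n ih =>
    rw [Finset.sum_range_succ, hD]
    convert ih using 1
    abel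

section

variable {E : Type*} [NormedAddCommGroup E] [InnerProductSpace ℝ E]

namespace ContinuousLinearMap

theorem IsPositive.apply_eq_zero_of_inner_eq_zero {T : E →L[ℝ] E} (hT : T.IsPositive) {v : E}
    (hv : ⟪T v, v⟫ = 0) : T v = 0 := by
  have hquad : ∀ t : ℝ, 0 ≤ ⟪T (T v), T v⟫ * (t * t) + (-2 * ‖T v‖ ^ 2) * t + 0 := fun t => by
    have h := hT.inner_nonneg_left (v - t • T v)
    simp only [map_sub, map_smul, inner_sub_left, inner_sub_right, real_inner_smul_left,
      real_inner_smul_right, hv, hT.inner_left_eq_inner_right (T v) v,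
      real_inner_self_eq_norm_sq] at h
    linarith
  have hdisc := discrim_le_zero hquad
  rw [discrim] at hdisc
  have : ‖T v‖ ^ 2 = 0 := by nlinarith [sq_nonneg (‖T v‖ ^ 2)]
  simpa using this

variable [CompleteSpace E]

theorem isPositive_one_sub_of_norm_le_one {T : E →L[ℝ] E} (hT : IsSelfAdjoint T)
    (h : ‖T‖ ≤ 1) : (1 - T).IsPositive := by
  refine (isPositive_iff' _).mpr ⟨(IsSelfAdjoint.one _).sub hT, fun x => ?_⟩
  have : ⟪T x, x⟫ ≤ ‖x‖ ^ 2 :=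
    calc ⟪T x, x⟫ ≤ ‖T x‖ * ‖x‖ := real_inner_le_norm _ _
      _ ≤ ‖x‖ * ‖x‖ := by gcongr; simpa using T.le_of_opNorm_le h x
      _ = ‖x‖ ^ 2 := by ring
  simpa [inner_sub_left, real_inner_self_eq_norm_sq] using this

theorem IsPositive.sub_mul_self {D : E →L[ℝ] E} (h0 : D.IsPositive) (h1 : (1 - D).IsPositive) :
    (D - D * D).IsPositive ∧ (1 - (D - D * D)).IsPositive := by
  have hD := h0.isSelfAdjoint.adjoint_eq
  have hD' := h1.isSelfAdjoint.adjoint_eq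
  constructor
  · have h := (h0.adjoint_conj (1 - D)).add (h1.adjoint_conj D)
    rw [hD, hD', ← mul_def, ← mul_def, ← mul_def, ← mul_def] at h
    convert h using 1
    noncomm_ring
  · have h := h1.add (isPositive_adjoint_comp_self D)
    rw [hD, ← mul_def] at h
    convert h using 1
    noncomm_ring

section Iterates

variable {D : ℕ → E →L[ℝ] E}

theorem isPositive_of_eq_sub_mul_self (hD : ∀ n, D (n + 1) = D n - D n * D n)
    (h0 : (D 0).IsPositive) (h1 : (1 - D 0).IsPositive) (n : ℕ) :
    (D n).IsPositive ∧ (1 - D n).IsPositive := by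
  induction n with
  | zero => exact ⟨h0, h1⟩
  | succ n ih =>
    rw [hD]
    exact ih.1.sub_mul_self ih.2

theorem tendsto_apply_of_eq_sub_mul_self (hD : ∀ n, D (n + 1) = D n - D n * D n)
    (h0 : (D 0).IsPositive) (h1 : (1 - D 0).IsPositive) (x : E) :
    Tendsto (fun n => D n x) atTop (𝓝 0) := by
  have hpos n := (isPositive_of_eq_sub_mul_self hD h0 h1 n).1
  have hsq : ∀ k, ⟪D k (D k x), x⟫ = ‖D k x‖ ^ 2 := fun k => by
    rw [(hpos k).inner_left_eq_inner_right, real_inner_self_eq_norm_sq]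
  have hsum : Summable fun n => ‖D n x‖ ^ 2 := by
    refine summable_of_sum_range_le (c := ⟪D 0 x, x⟫) (fun n => sq_nonneg _) fun n => ?_
    have h := congr(⟪$(sum_range_mul_self_add_eq_of_eq_sub_mul_self hD n) x, x⟫)
    simp only [add_apply, sum_apply, mul_apply_eq_comp, inner_add_left, sum_inner, hsq] at h
    linarith [(hpos n).inner_nonneg_left x]
  rw [tendsto_zero_iff_norm_tendsto_zero]
  simpa [Real.sqrt_sq (norm_nonneg _)] using hsum.tendsto_atTop_zero.sqrt

theorem inner_apply_apply_nonneg_of_eq_sub_mul_self (hD : ∀ n, D (n + 1) = D n - D n * D n)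
    (h0 : (D 0).IsPositive) (h1 : (1 - D 0).IsPositive) {B : E →L[ℝ] E} (hB : B.IsPositive)
    (hD₀B : Commute (D 0) B) (x : E) : 0 ≤ ⟪D 0 (B x), x⟫ := by
  have hDB : ∀ n, Commute (D n) B := fun n => by
    induction n with
    | zero => exact hD₀B
    | succ n ih => rw [hD]; exact ih.sub_left (ih.mul_left ih)
  have hle : ∀ n, ⟪D n (B x), x⟫ ≤ ⟪D 0 (B x), x⟫ := fun n => by
    have h := congr(⟪$(sum_range_mul_self_add_eq_of_eq_sub_mul_self hD n) (B x), x⟫)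
    simp only [add_apply, sum_apply, inner_add_left, sum_inner] at h
    rw [← h, le_add_iff_nonneg_left]
    refine Finset.sum_nonneg fun k _ => ?_
    rw [mul_apply_eq_comp, ← mul_apply_eq_comp (D k) B, (hDB k).eq, mul_apply_eq_comp,
      (isPositive_of_eq_sub_mul_self hD h0 h1 k).1.inner_left_eq_inner_right]
    exact hB.inner_nonneg_left _
  have hlim : Tendsto (fun n => ⟪D n (B x), x⟫) atTop (𝓝 0) := by
    simpa using (tendsto_apply_of_eq_sub_mul_self hD h0 h1 (B x)).inner tendsto_const_nhds
  exact le_of_tendsto' hlim hle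

end Iterates

theorem IsPositive.mul_of_commute {A B : E →L[ℝ] E} (hA : A.IsPositive) (hB : B.IsPositive)
    (hAB : Commute A B) : (A * B).IsPositive := by
  have hc : 0 < ‖A‖ + 1 := by positivity
  have hA₀ := hA.smul_of_nonneg (inv_nonneg.mpr hc.le)
  have hA₁ : (1 - (‖A‖ + 1)⁻¹ • A).IsPositive := by
    refine isPositive_one_sub_of_norm_le_one hA₀.isSelfAdjoint ?_
    rw [norm_smul, Real.norm_of_nonneg (by positivity), inv_mul_le_one₀ hc]
    linarith
  refine (isPositive_iff' _).mpr ⟨(hA.isSelfAdjoint.commute_iff hB.isSelfAdjoint).mp hAB,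
    fun x => ?_⟩
  have h := inner_apply_apply_nonneg_of_eq_sub_mul_self
    (D := fun n => (fun d => d - d * d)^[n] ((‖A‖ + 1)⁻¹ • A))
    (fun n => Function.iterate_succ_apply' _ n _) hA₀ hA₁ hB (hAB.smul_left _) x
  rw [Function.iterate_zero_apply, smul_apply, real_inner_smul_left] at h
  exact nonneg_of_mul_nonneg_right (by simpa [mul_comm] using h) (inv_pos.mpr hc)

theorem IsPositive.mul_eq_zero_of_mul_eq_neg {H K : E →L[ℝ] E} (hH : H.IsPositive)
    (hK : IsSelfAdjoint K) (h : H * K = -(K * H)) : H * K = 0 := by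
  have hKK : (K * K).IsPositive := by
    simpa [hK.adjoint_eq, ← mul_def] using isPositive_adjoint_comp_self K
  have hcomm : Commute H (K * K) := by
    rw [Commute, SemiconjBy, ← mul_assoc, h, neg_mul, mul_assoc, h, mul_neg, neg_neg, mul_assoc]
  ext x
  have hle : ⟪H (K x), K x⟫ ≤ 0 := by
    have h₁ := (hH.mul_of_commute hKK hcomm).inner_nonneg_left x
    have hKsymm : ∀ a b, ⟪K a, b⟫ = ⟪a, K b⟫ := hK.isSymmetric
    rw [← mul_assoc, h, neg_mul, neg_apply, mul_apply_eq_comp, mul_apply_eq_comp, inner_neg_left,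
      hKsymm] at h₁
    linarith
  exact hH.apply_eq_zero_of_inner_eq_zero (le_antisymm hle (hH.inner_nonneg_left _))

theorem IsPositive.eq_of_mul_self_eq {s t : E →L[ℝ] E} (hs : s.IsPositive) (ht : t.IsPositive)
    (h : s * s = t * t) : s = t := by
  have hK : IsSelfAdjoint (s - t) := hs.isSelfAdjoint.sub ht.isSelfAdjoint
  have hHK := (hs.add ht).mul_eq_zero_of_mul_eq_neg hK (by
    rw [← add_eq_zero_iff_eq_neg]
    noncomm_ring
    rw [h]
    abel)
  have hKsymm : ∀ a b, ⟪(s - t) a, b⟫ = ⟪a, (s - t) b⟫ := hK.isSymmetric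
  ext x
  have hy : s ((s - t) x) + t ((s - t) x) = 0 := by
    rw [← add_apply, ← mul_apply_eq_comp, hHK, zero_apply]
  have hsy : ⟪s ((s - t) x), (s - t) x⟫ = 0 := by
    have hs₀ := hs.inner_nonneg_left ((s - t) x)
    have ht₀ := ht.inner_nonneg_left ((s - t) x)
    have hsum : ⟪s ((s - t) x), (s - t) x⟫ + ⟪t ((s - t) x), (s - t) x⟫ = 0 := by
      rw [← inner_add_left, hy, inner_zero_left]
    linarith
  have hty : ⟪t ((s - t) x), (s - t) x⟫ = 0 := by
    rw [eq_neg_of_add_eq_zero_right hy, inner_neg_left, hsy, neg_zero]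
  have hnorm : ‖(s - t) x‖ ^ 2 = 0 := by
    rw [← real_inner_self_eq_norm_sq, hKsymm, sub_apply s t,
      hs.apply_eq_zero_of_inner_eq_zero hsy, ht.apply_eq_zero_of_inner_eq_zero hty, sub_zero,
      inner_zero_right]
  simpa [sub_eq_zero] using hnorm

theorem IsPositive.commute_of_commute_mul_self {s P : E →L[ℝ] E} (hs : s.IsPositive)
    (hP : IsSelfAdjoint P) (hPidem : IsIdempotentElem P) (h : Commute (s * s) P) :
    Commute s P := by
  set U : E →L[ℝ] E := (2 : ℝ) • P - 1
  have hU : IsSelfAdjoint U := ((IsSelfAdjoint.all _).smul hP).sub (.one _)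
  have hUU : U * U = 1 := by
    simp only [U, sub_mul, mul_sub, hPidem.eq, mul_one, one_mul, smul_mul_assoc, mul_smul_comm]
    module
  have hsU : Commute (s * s) U := (h.smul_right 2).sub_right (Commute.one_right _)
  have hconj : s = U * s * U := by
    refine hs.eq_of_mul_self_eq ?_ ?_
    · simpa [hU.adjoint_eq, ← mul_def, mul_assoc] using hs.adjoint_conj U
    · calc s * s = U * (U * (s * s)) := by rw [← mul_assoc, hUU, one_mul]
        _ = U * (s * s) * U := by nth_rw 1 [← hsU.eq]; noncomm_ring
        _ = U * s * (U * U) * s * U := by rw [hUU]; noncomm_ring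
        _ = U * s * U * (U * s * U) := by noncomm_ring
  have hsU' : Commute s U := by
    rw [Commute, SemiconjBy]
    conv_lhs => rw [hconj]
    rw [mul_assoc, hUU, mul_one]
  have : P = (1 / 2 : ℝ) • (U + 1) := by simp only [U]; module
  rw [this]
  exact (hsU'.add_right (Commute.one_right s)).smul_right _

end ContinuousLinearMap

section OrthogonalDecomposition

variable {ι : Type*} {P : ι → E →L[ℝ] E}

theorem apply_eq_of_hasSum_of_mem_range (hPidem : ∀ i, P i ∘L P i = P i)
    (hPorth : ∀ i j, i ≠ j → P i ∘L P j = 0) {w : ι → E} {f : E}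
    (hw : ∀ i, w i ∈ Set.range (P i)) (hf : HasSum w f) (i : ι) : P i f = w i := by
  refine ((P i).hasSum hf).unique ?_
  convert hasSum_single i fun j hj => ?_ using 1
  · obtain ⟨x, hx⟩ := hw i
    rw [← hx]
    exact congr($(hPidem i) x).symm
  · obtain ⟨x, hx⟩ := hw j
    rw [← hx]
    exact congr($(hPorth i j hj.symm) x)

theorem summable_iff_summable_norm_sq_of_mem_range [CompleteSpace E]
    (hPsa : ∀ i, IsSelfAdjoint (P i)) (hPorth : ∀ i j, i ≠ j → P i ∘L P j = 0) {v : ι → E}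
    (hv : ∀ i, v i ∈ Set.range (P i)) :
    Summable v ↔ Summable fun i => ‖v i‖ ^ 2 := by
  have hfam : OrthogonalFamily ℝ (fun i => LinearMap.range (P i : E →ₗ[ℝ] E))
      fun i => (LinearMap.range (P i : E →ₗ[ℝ] E)).subtypeₗᵢ := by
    rintro i j hij ⟨_, x, rfl⟩ ⟨_, y, rfl⟩
    have hsymm : ∀ a b, ⟪P i a, b⟫ = ⟪a, P i b⟫ := (hPsa i).isSymmetric
    change ⟪P i x, P j y⟫ = 0
    rw [hsymm, ← ContinuousLinearMap.comp_apply, hPorth i j hij, zero_apply, inner_zero_right]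
  exact hfam.summable_iff_norm_sq_summable fun i => ⟨v i, hv i⟩

end OrthogonalDecomposition

end

theorem range_of_sqrt_covariance_general
    {E : Type*} [NormedAddCommGroup E] [InnerProductSpace ℝ E] [CompleteSpace E]
    (P : ℕ → E →L[ℝ] E)
    (hPsa : ∀ l, IsSelfAdjoint (P l))
    (hPidem : ∀ l, P l ∘L P l = P l)
    (hPorth : ∀ l l', l ≠ l' → P l ∘L P l' = 0)
    (hPsum : ∀ f : E, HasSum (fun l => P l f) f)
    (b : ℕ → E →L[ℝ] E)
    (hcomm : ∀ l l', (b l) ∘L (P l') = (P l') ∘L (b l))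
    (s : ℕ → E →L[ℝ] E)
    (hspos : ∀ l, (s l).IsPositive)
    (hssq : ∀ l, (s l) ∘L (s l) = b l)
    (Bhalf : E →L[ℝ] E)
    (hBhalf : ∀ f : E, HasSum (fun l => s l (P l f)) (Bhalf f)) :
    ∀ u : E,
      ((u ∈ Set.range Bhalf) ↔
        ∃ v : ℕ → E, (∀ l, v l ∈ Set.range (P l)) ∧ (∀ l, s l (v l) = P l u) ∧
          Summable (fun l => ‖v l‖ ^ 2)) ∧
      (∀ v : ℕ → E, (∀ l, v l ∈ Set.range (P l)) → (∀ l, s l (v l) = P l u) →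
        Summable (fun l => ‖v l‖ ^ 2) →
        ∃ f : E, HasSum v f ∧ Bhalf f = u) := by
  intro u
  have hsP : ∀ l l', Commute (s l) (P l') := fun l l' =>
    (hspos l).commute_of_commute_mul_self (hPsa l') (hPidem l') (by
      rw [show s l * s l = b l from hssq l]; exact hcomm l l')
  have hsolve : ∀ v : ℕ → E, (∀ l, v l ∈ Set.range (P l)) → (∀ l, s l (v l) = P l u) →
      Summable (fun l => ‖v l‖ ^ 2) → ∃ f : E, HasSum v f ∧ Bhalf f = u := by
    intro v hv hsv hsq
    obtain ⟨f, hf⟩ := (summable_iff_summable_norm_sq_of_mem_range hPsa hPorth hv).mpr hsq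
    refine ⟨f, hf, (hBhalf f).unique ?_⟩
    simpa only [apply_eq_of_hasSum_of_mem_range hPidem hPorth hv hf, hsv] using hPsum u
  refine ⟨⟨?_, fun ⟨v, hv, hsv, hsq⟩ => (hsolve v hv hsv hsq).imp fun _ => And.right⟩, hsolve⟩
  rintro ⟨g, rfl⟩
  have hmem : ∀ l, s l (P l g) ∈ Set.range (P l) := fun l =>
    ⟨s l (P l g), by
      rw [← mul_apply_eq_comp (P l), ← (hsP l l).eq, mul_apply_eq_comp,
        ← ContinuousLinearMap.comp_apply (P l), hPidem]⟩
  refine ⟨fun l => P l g, fun l => ⟨g, rfl⟩, fun l => ?_, ?_⟩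
  · exact (apply_eq_of_hasSum_of_mem_range hPidem hPorth hmem (hBhalf g) l).symm
  · exact (summable_iff_summable_norm_sq_of_mem_range hPsa hPorth fun l => ⟨g, rfl⟩).mp
      (hPsum g).summable

/-- With `P l` orthogonal projections with pairwise orthogonal ranges
summing to the identity, `b l` bounded positive self-adjoint injective operators with
uniformly bounded norms commuting with the projections, `s l` the positive square root
of `b l`, and `Bhalf : f ↦ ∑ l, s l (P l f)` the square root of the covariance operator,
an element `u` lies in the range of `Bhalf` iff there is a sequence `v l ∈ range (P l)`
with `s l (v l) = P l u` and `∑ l, ‖v l‖² < ∞`; in that case `f := ∑ l, v l` satisfies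
`Bhalf f = u`, i.e. `B^{-1/2} u = ∑ l, v l`. -/
theorem range_of_sqrt_covariance
    {E : Type*} [NormedAddCommGroup E] [InnerProductSpace ℝ E] [CompleteSpace E]
    [TopologicalSpace.SeparableSpace E]
    (P : ℕ → E →L[ℝ] E)
    (hPsa : ∀ l, IsSelfAdjoint (P l))
    (hPidem : ∀ l, P l ∘L P l = P l)
    (hPorth : ∀ l l', l ≠ l' → P l ∘L P l' = 0)
    (hPsum : ∀ f : E, HasSum (fun l => P l f) f)
    (b : ℕ → E →L[ℝ] E)
    (hbpos : ∀ l, (b l).IsPositive)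
    (hbinj : ∀ l, Function.Injective (b l))
    (C : ℝ) (hbnd : ∀ l, ‖b l‖ ≤ C)
    (hcomm : ∀ l l', (b l) ∘L (P l') = (P l') ∘L (b l))
    (s : ℕ → E →L[ℝ] E)
    (hspos : ∀ l, (s l).IsPositive)
    (hssq : ∀ l, (s l) ∘L (s l) = b l)
    (Bhalf : E →L[ℝ] E)
    (hBhalf : ∀ f : E, HasSum (fun l => s l (P l f)) (Bhalf f)) :
    ∀ u : E,
      ((u ∈ Set.range Bhalf) ↔
        ∃ v : ℕ → E, (∀ l, v l ∈ Set.range (P l)) ∧ (∀ l, s l (v l) = P l u) ∧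
          Summable (fun l => ‖v l‖ ^ 2)) ∧
      (∀ v : ℕ → E, (∀ l, v l ∈ Set.range (P l)) → (∀ l, s l (v l) = P l u) →
        Summable (fun l => ‖v l‖ ^ 2) →
        ∃ f : E, HasSum v f ∧ Bhalf f = u) :=
  range_of_sqrt_covariance_general P hPsa hPidem hPorth hPsum b hcomm s hspos hssq Bhalf hBhalf
end

section
/- Let E and 𝓗 be separable real Hilbert spaces, h : ℕ → ℕ, (ψ_{k,l,m}) a Hilbert (orthonormal) basis of E indexed by triples (k, l, m) with k ∈ ℕ, l ∈ ℕ, m ∈ Fin (h l), and (e_k)_{k∈ℕ} a Hilbert basis of 𝓗. Let (d_l)_{l∈ℕ} be bounded operators on 𝓗 and let D be a bounded operator on E acting block-diagonally, i.e. ⟨D ψ_{k,l,m}, ψ_{k',l',m'}⟩ = 0 unless l = l' and m = m', and ⟨D ψ_{k,l,m}, ψ_{k',l,m}⟩ = ⟨d_l e_k, e_{k'}⟩ for all k, k', l, m. Then, as an identity in [0, ∞], Σ_{l∈ℕ} Σ_{m∈Fin(h l)} Σ_{k∈ℕ} ‖D ψ_{k,l,m}‖² = Σ_{l∈ℕ}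 h(l) · Σ_{k∈ℕ} ‖d_l e_k‖². In particular D is Hilbert–Schmidt if and only if Σ_l h(l) ‖d_l‖²_{HS} < ∞, where ‖d_l‖²_{HS} := Σ_k ‖d_l e_k‖², and then its squared Hilbert–Schmidt norm equals Σ_l h(l) ‖d_l‖²_{HS}. -/
/-!
Each column `D ψ_{k,l,m}` has, in the basis `ψ`, the coordinates of `d_l e_k` in the basis `e`
placed along the fibre `{(k', l, m)}` and zeros elsewhere, so by Parseval
`‖D ψ_{k,l,m}‖ = ‖d_l e_k‖`. Summing over `k` and then over the `h(l)` values of `m` gives the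
identity; in `[0, ∞]` the sum over the whole basis may be reordered into this iterated sum.
-/

open RealInnerProductSpace
open scoped ENNReal

namespace HilbertBasis

variable {𝕜 ι κ E F : Type*} [RCLike 𝕜] [NormedAddCommGroup E] [InnerProductSpace 𝕜 E]
  [NormedAddCommGroup F] [InnerProductSpace 𝕜 F]

theorem hasSum_norm_inner_sq (b : HilbertBasis ι 𝕜 E) (x : E) :
    HasSum (fun i => ‖inner 𝕜 x (b i)‖ ^ 2) (‖x‖ ^ 2) := by
  have h := b.hasSum_inner_mul_inner x x
  rw [inner_self_eq_norm_sq_to_K] at h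
  refine (RCLike.hasSum_ofReal 𝕜).mp ?_
  convert h using 2 with i
  · rw [← inner_conj_symm (b i) x, RCLike.mul_conj, RCLike.ofReal_pow]
  · rw [RCLike.ofReal_pow]

theorem norm_eq_of_inner_eq_comp (b : HilbertBasis ι 𝕜 E) (c : HilbertBasis κ 𝕜 F)
    {x : E} {y : F} {j : κ → ι} (hj : Function.Injective j)
    (hzero : ∀ i ∉ Set.range j, inner 𝕜 x (b i) = 0)
    (hcoord : ∀ k, inner 𝕜 x (b (j k)) = inner 𝕜 y (c k)) : ‖x‖ = ‖y‖ := by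
  have hx : HasSum (fun k => ‖inner 𝕜 y (c k)‖ ^ 2) (‖x‖ ^ 2) := by
    simp only [← hcoord]
    exact (hj.hasSum_iff (f := fun i => ‖inner 𝕜 x (b i)‖ ^ 2)
      fun i hi => by simp [hzero i hi]).mpr (b.hasSum_norm_inner_sq x)
  exact (pow_left_inj₀ (norm_nonneg _) (norm_nonneg _) two_ne_zero).mp
    (hx.unique (c.hasSum_norm_inner_sq y))

end HilbertBasis

theorem ENNReal.tsum_prod_sigma {α : Type*} {β : α → Type*} {γ : Type*}
    (f : γ × (Σ a, β a) → ℝ≥0∞) :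
    ∑' p, f p = ∑' a, ∑' b : β a, ∑' c, f (c, ⟨a, b⟩) := by
  rw [ENNReal.tsum_prod', ENNReal.tsum_comm, ENNReal.tsum_sigma']

theorem hilbert_schmidt_block_diagonal_general
    {E 𝓗 : Type*} [NormedAddCommGroup E] [InnerProductSpace ℝ E]
    [NormedAddCommGroup 𝓗] [InnerProductSpace ℝ 𝓗]
    (h : ℕ → ℕ)
    (ψ : HilbertBasis (ℕ × (Σ l : ℕ, Fin (h l))) ℝ E)
    (e : HilbertBasis ℕ ℝ 𝓗)
    (d : ℕ → 𝓗 →L[ℝ] 𝓗)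
    (D : E →L[ℝ] E)
    (hD_offdiag : ∀ (k k' l l' : ℕ) (m : Fin (h l)) (m' : Fin (h l')),
      ((⟨l, m⟩ : Σ l : ℕ, Fin (h l)) ≠ (⟨l', m'⟩ : Σ l : ℕ, Fin (h l))) →
        ⟪D (ψ (k, ⟨l, m⟩)), ψ (k', ⟨l', m'⟩)⟫ = 0)
    (hD_diag : ∀ (k k' l : ℕ) (m : Fin (h l)),
      ⟪D (ψ (k, ⟨l, m⟩)), ψ (k', ⟨l, m⟩)⟫ = ⟪d l (e k), e k'⟫) :
    (∑' l : ℕ, ∑' m : Fin (h l), ∑' k : ℕ, ENNReal.ofReal (‖D (ψ (k, ⟨l, m⟩))‖ ^ 2))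
      = ∑' l : ℕ, (h l : ℝ≥0∞) * ∑' k : ℕ, ENNReal.ofReal (‖d l (e k)‖ ^ 2) ∧
    (∑' p : ℕ × (Σ l : ℕ, Fin (h l)), ENNReal.ofReal (‖D (ψ p)‖ ^ 2))
      = ∑' l : ℕ, (h l : ℝ≥0∞) * ∑' k : ℕ, ENNReal.ofReal (‖d l (e k)‖ ^ 2) := by
  have norm_column (k l : ℕ) (m : Fin (h l)) : ‖D (ψ (k, ⟨l, m⟩))‖ = ‖d l (e k)‖ := by
    refine ψ.norm_eq_of_inner_eq_comp e (Prod.mk_left_injective _) ?_ (hD_diag k · l m)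
    rintro ⟨k', l', m'⟩ hp
    refine hD_offdiag k k' l l' m m' fun hlm => hp ⟨k', ?_⟩
    rw [hlm]
  have block_sum : (∑' l : ℕ, ∑' m : Fin (h l), ∑' k : ℕ,
      ENNReal.ofReal (‖D (ψ (k, ⟨l, m⟩))‖ ^ 2))
        = ∑' l : ℕ, (h l : ℝ≥0∞) * ∑' k : ℕ, ENNReal.ofReal (‖d l (e k)‖ ^ 2) := by
    simp [norm_column]
  exact ⟨block_sum, (ENNReal.tsum_prod_sigma _).trans block_sum⟩

/-- If `D` acts block-diagonally on a Hilbert basis `ψ` of `E` indexed by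
triples `(k, l, m)` with `m : Fin (h l)`, with block `d l` (expressed on a Hilbert basis
`e` of `𝓗`) repeated `h l` times in degree `l`, then (as an identity in `[0,∞]`)
`∑_l ∑_{m} ∑_k ‖D ψ_{k,l,m}‖² = ∑_l h(l) · ∑_k ‖d_l e_k‖²`; in particular `D` is
Hilbert–Schmidt iff `∑_l h(l) ‖d_l‖²_{HS} < ∞`, and its squared Hilbert–Schmidt norm
(the sum of `‖D ψ_{k,l,m}‖²` over the whole basis) then equals this quantity. -/
theorem hilbert_schmidt_block_diagonal
    {E 𝓗 : Type*} [NormedAddCommGroup E] [InnerProductSpace ℝ E] [CompleteSpace E]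
    [TopologicalSpace.SeparableSpace E]
    [NormedAddCommGroup 𝓗] [InnerProductSpace ℝ 𝓗] [CompleteSpace 𝓗]
    [TopologicalSpace.SeparableSpace 𝓗]
    (h : ℕ → ℕ)
    (ψ : HilbertBasis (ℕ × (Σ l : ℕ, Fin (h l))) ℝ E)
    (e : HilbertBasis ℕ ℝ 𝓗)
    (d : ℕ → 𝓗 →L[ℝ] 𝓗)
    (D : E →L[ℝ] E)
    (hD_offdiag : ∀ (k k' l l' : ℕ) (m : Fin (h l)) (m' : Fin (h l')),
      ((⟨l, m⟩ : Σ l : ℕ, Fin (h l)) ≠ (⟨l', m'⟩ : Σ l : ℕ, Fin (h l))) →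
        ⟪D (ψ (k, ⟨l, m⟩)), ψ (k', ⟨l', m'⟩)⟫ = 0)
    (hD_diag : ∀ (k k' l : ℕ) (m : Fin (h l)),
      ⟪D (ψ (k, ⟨l, m⟩)), ψ (k', ⟨l, m⟩)⟫ = ⟪d l (e k), e k'⟫) :
    (∑' l : ℕ, ∑' m : Fin (h l), ∑' k : ℕ, ENNReal.ofReal (‖D (ψ (k, ⟨l, m⟩))‖ ^ 2))
      = ∑' l : ℕ, (h l : ℝ≥0∞) * ∑' k : ℕ, ENNReal.ofReal (‖d l (e k)‖ ^ 2) ∧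
    (∑' p : ℕ × (Σ l : ℕ, Fin (h l)), ENNReal.ofReal (‖D (ψ p)‖ ^ 2))
      = ∑' l : ℕ, (h l : ℝ≥0∞) * ∑' k : ℕ, ENNReal.ofReal (‖d l (e k)‖ ^ 2) :=
  hilbert_schmidt_block_diagonal_general h ψ e d D hD_offdiag hD_diag
end

section
/- Let 𝓗 be a separable real Hilbert space, B a compact self-adjoint positive injective bounded operator on 𝓗, (e_n)_{n∈ℕ} a Hilbert basis of 𝓗 consisting of eigenvectors of B with B e_n = λ_n e_n and λ_n > 0 for all n. Let A be a bounded operator on 𝓗 and suppose M ≥ 0 satisfies Σ_{m,n∈ℕ} ( ⟨A e_m, e_n⟩ / (√λ_m · √λ_n) − δ_{mn} )² ≤ M², where δ_{mn} = 1 if m = n and 0 otherwise. Then for every u ∈ 𝓗 with u ≠ 0, |⟨(A − B) u, u⟩| ≤ M · ⟨B u, u⟩; equivalently, |⟨(A − B)u, u⟩ / ⟨B u, u⟩| ≤ ‖B^{-1/2} A B^{-1/2} − I‖_{HS}. -/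
/-!
With `w n = √(lam n) ⟪u, e n⟫` and `T` the matrix of `B^{-1/2} A B^{-1/2} - 1` in the
eigenbasis, expanding in the basis gives `⟪B u, u⟫ = ∑ₙ w n ^ 2` and
`⟪(A - B) u, u⟫ = ∑_{m,n} w m * w n * T m n`. A single Cauchy–Schwarz inequality on `ℕ × ℕ`
bounds the square of the latter by `(∑ T²) (∑ w²)²`, that is by `M² ⟪B u, u⟫²`.
-/

open RealInnerProductSpace

theorem summable_mul_of_summable_sq {ι : Type*} {f g : ι → ℝ} (hf : Summable fun i => f i ^ 2)
    (hg : Summable fun i => g i ^ 2) : Summable fun i => f i * g i := by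
  refine .of_norm_bounded ((hf.add hg).div_const 2) fun i => ?_
  rw [Real.norm_eq_abs, abs_le]
  constructor <;> nlinarith [sq_nonneg (f i + g i), sq_nonneg (f i - g i)]

theorem tsum_mul_sq_le_sq_mul_sq {ι : Type*} {f g : ι → ℝ} (hf : Summable fun i => f i ^ 2)
    (hg : Summable fun i => g i ^ 2) :
    (∑' i, f i * g i) ^ 2 ≤ (∑' i, f i ^ 2) * ∑' i, g i ^ 2 :=
  le_of_tendsto_of_tendsto' ((summable_mul_of_summable_sq hf hg).hasSum.pow 2)
    (Filter.Tendsto.mul hf.hasSum hg.hasSum) fun s => s.sum_mul_sq_le_sq_mul_sq f g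

theorem hasSum_mul_sq {ι κ : Type*} {a : ι → ℝ} {b : κ → ℝ} (ha : Summable fun i => a i ^ 2)
    (hb : Summable fun j => b j ^ 2) :
    HasSum (fun p : ι × κ => (a p.1 * b p.2) ^ 2) ((∑' i, a i ^ 2) * ∑' j, b j ^ 2) := by
  simp only [mul_pow]
  have hab : Summable fun p : ι × κ => a p.1 ^ 2 * b p.2 ^ 2 :=
    summable_mul_of_summable_norm (f := fun i => a i ^ 2) (g := fun j => b j ^ 2) ha.norm hb.norm
  exact ha.hasSum.mul hb.hasSum hab

theorem sq_tsum_mul_mul_le {ι κ : Type*} {a : ι → ℝ} {b : κ → ℝ} {T : ι × κ → ℝ}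
    (ha : Summable fun i => a i ^ 2) (hb : Summable fun j => b j ^ 2)
    (hT : Summable fun p => T p ^ 2) :
    (∑' p, a p.1 * b p.2 * T p) ^ 2 ≤ (∑' i, a i ^ 2) * (∑' j, b j ^ 2) * ∑' p, T p ^ 2 := by
  rw [← (hasSum_mul_sq ha hb).tsum_eq]
  exact tsum_mul_sq_le_sq_mul_sq (hasSum_mul_sq ha hb).summable hT

theorem summable_and_tsum_le_of_tsum_ofReal_le {ι : Type*} {f : ι → ℝ} {r : ℝ}
    (hf : ∀ i, 0 ≤ f i) (hr : 0 ≤ r) (h : ∑' i, ENNReal.ofReal (f i) ≤ ENNReal.ofReal r) :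
    Summable f ∧ ∑' i, f i ≤ r := by
  have hsum : Summable f := by
    simpa [ENNReal.toReal_ofReal (hf _)] using
      ENNReal.summable_toReal (ne_top_of_le_ne_top ENNReal.ofReal_ne_top h)
  refine ⟨hsum, (ENNReal.ofReal_le_ofReal_iff hr).1 ?_⟩
  rwa [ENNReal.ofReal_tsum_of_nonneg hf hsum]

theorem HilbertBasis.hasSum_inner_apply {ι E F : Type*} [NormedAddCommGroup E]
    [InnerProductSpace ℝ E] [NormedAddCommGroup F] [InnerProductSpace ℝ F]
    (e : HilbertBasis ι ℝ E) (D : E →L[ℝ] F) (u : E) (v : F) :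
    HasSum (fun i => ⟪u, e i⟫ * ⟪D (e i), v⟫) ⟪D u, v⟫ := by
  have := ((e.hasSum_repr u).mapL D).mapL (innerSL ℝ v)
  simpa [e.repr_apply_apply, real_inner_smul_right, real_inner_comm v, real_inner_comm u] using this

/-- The `(m, n)` entry of `B^{-1/2} A B^{-1/2} - 1` in an eigenbasis `e` of `B` with eigenvalues
`lam`. -/
noncomputable def normalizedDeviation {ι E : Type*} [DecidableEq ι] [NormedAddCommGroup E]
    [InnerProductSpace ℝ E] (A : E →L[ℝ] E) (e : HilbertBasis ι ℝ E) (lam : ι → ℝ) (m n : ι) : ℝ :=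
  ⟪A (e m), e n⟫ / (√(lam m) * √(lam n)) - if m = n then 1 else 0

section Eigenbasis

variable {ι E : Type*} [NormedAddCommGroup E] [InnerProductSpace ℝ E]
  {e : HilbertBasis ι ℝ E} {lam : ι → ℝ} {B : E →L[ℝ] E}

theorem inner_sub_apply_eigenbasis [DecidableEq ι] (heig : ∀ i, B (e i) = lam i • e i)
    (hlam : ∀ i, 0 < lam i) (A : E →L[ℝ] E) (m n : ι) :
    ⟪(A - B) (e m), e n⟫ = √(lam m) * √(lam n) * normalizedDeviation A e lam m n := by
  have hsqrt : √(lam m) * √(lam n) ≠ 0 := by positivity [hlam m, hlam n]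
  rw [normalizedDeviation, mul_sub, mul_div_cancel₀ _ hsqrt, sub_apply,
    inner_sub_left, heig, real_inner_smul_left, orthonormal_iff_ite.1 e.orthonormal]
  split_ifs with h
  · subst h; simp [Real.mul_self_sqrt (hlam m).le]
  · simp

theorem hasSum_sq_inner_eigenbasis (heig : ∀ i, B (e i) = lam i • e i) (hlam : ∀ i, 0 ≤ lam i)
    (u : E) : HasSum (fun i => (√(lam i) * ⟪u, e i⟫) ^ 2) ⟪B u, u⟫ := by
  convert e.hasSum_inner_apply B u u using 2 with i
  rw [heig, real_inner_smul_left, mul_pow, Real.sq_sqrt (hlam i), real_inner_comm u]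
  ring

theorem hasSum_inner_sub_apply_eigenbasis [DecidableEq ι] (heig : ∀ i, B (e i) = lam i • e i)
    (hlam : ∀ i, 0 < lam i) (A : E →L[ℝ] E) (u : E)
    (hT : Summable fun p : ι × ι => normalizedDeviation A e lam p.1 p.2 ^ 2) :
    HasSum (fun p : ι × ι => √(lam p.1) * ⟪u, e p.1⟫ * (√(lam p.2) * ⟪u, e p.2⟫) *
      normalizedDeviation A e lam p.1 p.2) ⟪(A - B) u, u⟫ := by
  set w := fun i => √(lam i) * ⟪u, e i⟫
  have hw : Summable fun i => w i ^ 2 :=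
    (hasSum_sq_inner_eigenbasis heig (hlam · |>.le) u).summable
  have hsum := summable_mul_of_summable_sq (hasSum_mul_sq hw hw).summable hT
  have hrow (m : ι) : HasSum (fun n => w m * w n * normalizedDeviation A e lam m n)
      (⟪u, e m⟫ * ⟪(A - B) (e m), u⟫) := by
    have hterm : (fun n => w m * w n * normalizedDeviation A e lam m n) =
        fun n => ⟪u, e m⟫ * (⟪(A - B) (e m), e n⟫ * ⟪e n, u⟫) := by
      funext n
      rw [inner_sub_apply_eigenbasis heig hlam, real_inner_comm u (e n)]
      ring
    rw [hterm]
    exact (e.hasSum_inner_mul_inner ((A - B) (e m)) u).mul_left _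
  -- The double series converges absolutely, so its sum can be computed row by row.
  convert hsum.hasSum using 1
  exact (e.hasSum_inner_apply (A - B) u u).unique (hsum.hasSum.prod_fiberwise hrow)

end Eigenbasis

theorem abs_inner_sub_le_hs_mul_inner_general
    {𝓗 : Type*} [NormedAddCommGroup 𝓗] [InnerProductSpace ℝ 𝓗]
    (B : 𝓗 →L[ℝ] 𝓗)
    (e : HilbertBasis ℕ ℝ 𝓗)
    (lam : ℕ → ℝ)
    (heig : ∀ n, B (e n) = lam n • e n)
    (hlam : ∀ n, 0 < lam n)
    (A : 𝓗 →L[ℝ] 𝓗)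
    (M : ℝ) (hM : 0 ≤ M)
    (hHS : (∑' m : ℕ, ∑' n : ℕ, ENNReal.ofReal
        ((⟪A (e m), e n⟫ / (Real.sqrt (lam m) * Real.sqrt (lam n))
          - if m = n then (1 : ℝ) else 0) ^ 2)) ≤ ENNReal.ofReal (M ^ 2)) :
    ∀ u : 𝓗, u ≠ 0 → |⟪(A - B) u, u⟫| ≤ M * ⟪B u, u⟫ := by
  intro u _
  have hHS' : ∑' p : ℕ × ℕ, ENNReal.ofReal (normalizedDeviation A e lam p.1 p.2 ^ 2) ≤
      ENNReal.ofReal (M ^ 2) :=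
    ENNReal.tsum_prod.trans_le hHS
  obtain ⟨hT, hTM⟩ :=
    summable_and_tsum_le_of_tsum_ofReal_le (fun _ => sq_nonneg _) (sq_nonneg M) hHS'
  have hB := hasSum_sq_inner_eigenbasis heig (hlam · |>.le) u
  have hAB := hasSum_inner_sub_apply_eigenbasis heig hlam A u hT
  have hsq : ⟪(A - B) u, u⟫ ^ 2 ≤ (M * ⟪B u, u⟫) ^ 2 := by
    calc ⟪(A - B) u, u⟫ ^ 2 = (∑' p : ℕ × ℕ, _) ^ 2 := by rw [hAB.tsum_eq]
      _ ≤ _ := sq_tsum_mul_mul_le hB.summable hB.summable hT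
      _ = ⟪B u, u⟫ ^ 2 * ∑' p : ℕ × ℕ, normalizedDeviation A e lam p.1 p.2 ^ 2 := by
        rw [hB.tsum_eq, sq]
      _ ≤ ⟪B u, u⟫ ^ 2 * M ^ 2 := by gcongr
      _ = (M * ⟪B u, u⟫) ^ 2 := by ring
  exact abs_le_of_sq_le_sq hsq (mul_nonneg hM (hB.nonneg fun _ => sq_nonneg _))

/-- Let `B` be a compact self-adjoint positive injective operator on a
separable real Hilbert space with eigenbasis `(e n)` and eigenvalues `λ n > 0`, and let
`A` be a bounded operator. If `M ≥ 0` satisfies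
`∑_{m,n} (⟨A e_m, e_n⟩/(√λ_m √λ_n) − δ_{mn})² ≤ M²` (the left-hand side being the
squared Hilbert–Schmidt norm of `B^{-1/2} A B^{-1/2} − I`), then for every `u ≠ 0`,
`|⟨(A − B)u, u⟩| ≤ M ⟨B u, u⟩`. -/
theorem abs_inner_sub_le_hs_mul_inner
    {𝓗 : Type*} [NormedAddCommGroup 𝓗] [InnerProductSpace ℝ 𝓗] [CompleteSpace 𝓗]
    [TopologicalSpace.SeparableSpace 𝓗]
    (B : 𝓗 →L[ℝ] 𝓗)
    (hBcompact : IsCompactOperator B)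
    (hBsa : IsSelfAdjoint B)
    (hBpos : B.IsPositive)
    (hBinj : Function.Injective B)
    (e : HilbertBasis ℕ ℝ 𝓗)
    (lam : ℕ → ℝ)
    (heig : ∀ n, B (e n) = lam n • e n)
    (hlam : ∀ n, 0 < lam n)
    (A : 𝓗 →L[ℝ] 𝓗)
    (M : ℝ) (hM : 0 ≤ M)
    (hHS : (∑' m : ℕ, ∑' n : ℕ, ENNReal.ofReal
        ((⟪A (e m), e n⟫ / (Real.sqrt (lam m) * Real.sqrt (lam n))
          - if m = n then (1 : ℝ) else 0) ^ 2)) ≤ ENNReal.ofReal (M ^ 2)) :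
    ∀ u : 𝓗, u ≠ 0 → |⟪(A - B) u, u⟫| ≤ M * ⟪B u, u⟫ :=
  abs_inner_sub_le_hs_mul_inner_general B e lam heig hlam A M hM hHS
end

section
/- Fix an integer d ≥ 2 and parameters σ₁, σ₂ > 0, α₁₁, α₂₂, α₁₂ ∈ (0,1), ρ₁₂ ∈ (0,1). For n ∈ ℕ define the real 2×2 matrix b_n with entries b_n(i,i) = σ_i² · C(d+n−2, n) · α_{ii}^n (1−α_{ii})^{d−1} for i = 1, 2, and b_n(1,2) = b_n(2,1) = ρ₁₂ σ₁ σ₂ · C(d+n−2, n) · α₁₂^n (1−α₁₂)^{d−1}, where C(a, b) denotes the binomial coefficient. If α₁₂ ≤ √(α₁₁ α₂₂) and ρ₁₂ < ( (1−α₁₁)(1−α₂₂) / (1−α₁₂)² )^{(d−1)/2}, then b_n is a positive definite matrix for every n ∈ ℕ. -/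
/-!
The diagonal entries of `b_n` are positive, so `b_n` is positive definite iff the square of
its off-diagonal entry is below the product of its diagonal entries. After cancelling the
common factor `σ₁² σ₂² C(d+n-2,n)²`, this splits into two independent inequalities:
`(α₁₂ⁿ)² ≤ α₁₁ⁿ α₂₂ⁿ`, from `α₁₂² ≤ α₁₁ α₂₂`, and
`ρ₁₂² (1-α₁₂)^{2(d-1)} < (1-α₁₁)^{d-1} (1-α₂₂)^{d-1}`, which is the square of the bound on `ρ₁₂`.
-/

open Matrix in
theorem Matrix.posDef_fin_two_of_pos_of_sq_lt {R : Type*} [Field R] [LinearOrder R]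
    [IsStrictOrderedRing R] [StarRing R] [TrivialStar R] {a b c : R}
    (ha : 0 < a) (hb : b ^ 2 < a * c) : (!![a, b; b, c] : Matrix (Fin 2) (Fin 2) R).PosDef := by
  rw [posDef_iff_dotProduct_mulVec]
  refine ⟨by ext i j; fin_cases i <;> fin_cases j <;> simp [conjTranspose_apply], fun x hx => ?_⟩
  have hquad : star x ⬝ᵥ !![a, b; b, c] *ᵥ x
      = a * x 0 ^ 2 + 2 * b * x 0 * x 1 + c * x 1 ^ 2 := by
    simp only [star_trivial, dotProduct, mulVec, Fin.sum_univ_two, of_apply, cons_val',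
      cons_val_zero, cons_val_one, empty_val', cons_val_fin_one]
    ring
  have hcomplete : a * (star x ⬝ᵥ !![a, b; b, c] *ᵥ x)
      = (a * x 0 + b * x 1) ^ 2 + (a * c - b ^ 2) * x 1 ^ 2 := by
    rw [hquad]; ring
  refine pos_of_mul_pos_right (hcomplete ▸ ?_) ha.le
  by_cases hx₁ : x 1 = 0
  · have hx₀ : x 0 ≠ 0 := fun hx₀ => hx (by ext i; fin_cases i <;> assumption)
    simp only [hx₁, mul_zero, add_zero, ne_eq, OfNat.ofNat_ne_zero, not_false_eq_true,
      zero_pow]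
    positivity
  · have : 0 < (a * c - b ^ 2) * x 1 ^ 2 := mul_pos (sub_pos.2 hb) (by positivity)
    positivity

theorem sq_lt_pow_of_lt_rpow_div_two {ρ x : ℝ} {k : ℕ} (hρ : 0 ≤ ρ) (hx : 0 ≤ x)
    (h : ρ < x ^ ((k : ℝ) / 2)) : ρ ^ 2 < x ^ k := by
  rw [Real.rpow_div_two_eq_sqrt _ hx, Real.rpow_natCast] at h
  calc ρ ^ 2 < (√x ^ k) ^ 2 := pow_lt_pow_left₀ h hρ two_ne_zero
    _ = x ^ k := by rw [← pow_mul, mul_comm, pow_mul, Real.sq_sqrt hx]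

theorem sq_mul_pow_lt_of_lt_rpow_div_two {ρ a b c : ℝ} {k : ℕ} (hρ : 0 ≤ ρ) (ha : 0 ≤ a)
    (hb : 0 ≤ b) (hc : 0 < c) (h : ρ < (a * b / c ^ 2) ^ ((k : ℝ) / 2)) :
    (ρ * c ^ k) ^ 2 < a ^ k * b ^ k := by
  have hsq := sq_lt_pow_of_lt_rpow_div_two hρ (by positivity) h
  rw [div_pow, lt_div_iff₀ (by positivity), ← pow_mul, mul_comm 2 k, pow_mul, mul_pow] at hsq
  rwa [mul_pow]

theorem sq_pow_le_of_le_sqrt {x a b : ℝ} (hx : 0 ≤ x) (ha : 0 ≤ a) (hb : 0 ≤ b)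
    (h : x ≤ √(a * b)) (n : ℕ) : (x ^ n) ^ 2 ≤ a ^ n * b ^ n := by
  rw [Real.le_sqrt hx (by positivity)] at h
  rw [← pow_mul, mul_comm, pow_mul, ← mul_pow]
  exact pow_le_pow_left₀ (by positivity) h n

/-- The matrix-valued `d`-Schoenberg coefficients of the bivariate
multiquadratic covariance family:
`b_n(i,i) = σ_i² C(d+n−2,n) α_{ii}^n (1−α_{ii})^{d−1}`,
`b_n(1,2) = b_n(2,1) = ρ₁₂ σ₁ σ₂ C(d+n−2,n) α₁₂^n (1−α₁₂)^{d−1}`.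
If `α₁₂ ≤ √(α₁₁ α₂₂)` and `ρ₁₂ < ((1−α₁₁)(1−α₂₂)/(1−α₁₂)²)^{(d−1)/2}`, then every
`b_n` is positive definite. -/
theorem multiquadratic_schoenberg_posDef
    (d : ℕ) (hd : 2 ≤ d)
    (σ₁ σ₂ α₁₁ α₂₂ α₁₂ ρ₁₂ : ℝ)
    (hσ₁ : 0 < σ₁) (hσ₂ : 0 < σ₂)
    (hα₁₁ : α₁₁ ∈ Set.Ioo (0 : ℝ) 1) (hα₂₂ : α₂₂ ∈ Set.Ioo (0 : ℝ) 1)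
    (hα₁₂ : α₁₂ ∈ Set.Ioo (0 : ℝ) 1) (hρ : ρ₁₂ ∈ Set.Ioo (0 : ℝ) 1)
    (hcross : α₁₂ ≤ Real.sqrt (α₁₁ * α₂₂))
    (hρbound : ρ₁₂ < ((1 - α₁₁) * (1 - α₂₂) / (1 - α₁₂) ^ 2) ^ (((d : ℝ) - 1) / 2)) :
    ∀ n : ℕ,
      (!![σ₁ ^ 2 * (Nat.choose (d + n - 2) n) * α₁₁ ^ n * (1 - α₁₁) ^ (d - 1),
          ρ₁₂ * σ₁ * σ₂ * (Nat.choose (d + n - 2) n) * α₁₂ ^ n * (1 - α₁₂) ^ (d - 1);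
          ρ₁₂ * σ₁ * σ₂ * (Nat.choose (d + n - 2) n) * α₁₂ ^ n * (1 - α₁₂) ^ (d - 1),
          σ₂ ^ 2 * (Nat.choose (d + n - 2) n) * α₂₂ ^ n * (1 - α₂₂) ^ (d - 1)] :
        Matrix (Fin 2) (Fin 2) ℝ).PosDef := by
  obtain ⟨hα₁₁₀, hα₁₁₁⟩ := hα₁₁
  obtain ⟨hα₂₂₀, hα₂₂₁⟩ := hα₂₂
  obtain ⟨hα₁₂₀, hα₁₂₁⟩ := hα₁₂
  have h₁₁ : 0 < 1 - α₁₁ := sub_pos.2 hα₁₁₁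
  have h₂₂ : 0 < 1 - α₂₂ := sub_pos.2 hα₂₂₁
  rw [show (d : ℝ) - 1 = ((d - 1 : ℕ) : ℝ) by push_cast [show 1 ≤ d by omega]; rfl] at hρbound
  have hρ_sq := sq_mul_pow_lt_of_lt_rpow_div_two hρ.1.le h₁₁.le h₂₂.le (sub_pos.2 hα₁₂₁)
    hρbound
  intro n
  have hα_sq := sq_pow_le_of_le_sqrt hα₁₂₀.le hα₁₁₀.le hα₂₂₀.le hcross n
  have hC : 0 < ((d + n - 2).choose n : ℝ) := by exact_mod_cast Nat.choose_pos (by omega)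
  apply Matrix.posDef_fin_two_of_pos_of_sq_lt (by positivity)
  set C := ((d + n - 2).choose n : ℝ)
  calc (ρ₁₂ * σ₁ * σ₂ * C * α₁₂ ^ n * (1 - α₁₂) ^ (d - 1)) ^ 2
      = (σ₁ * σ₂ * C) ^ 2 * ((α₁₂ ^ n) ^ 2 * (ρ₁₂ * (1 - α₁₂) ^ (d - 1)) ^ 2) := by ring
    _ < (σ₁ * σ₂ * C) ^ 2 *
        ((α₁₁ ^ n * α₂₂ ^ n) * ((1 - α₁₁) ^ (d - 1) * (1 - α₂₂) ^ (d - 1))) :=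
      mul_lt_mul_of_pos_left (mul_lt_mul' hα_sq hρ_sq (by positivity) (by positivity))
        (by positivity)
    _ = _ := by ring
end

section
/- Fix an integer d ≥ 2 and parameters σ₁, σ₂ > 0, α₁₁, α₂₂, α₁₂ ∈ (0,1), ρ₁₂ ∈ (0,1), and for n ∈ ℕ let b_n be the real 2×2 matrix with entries b_n(i,i) = σ_i² · C(d+n−2, n) · α_{ii}^n (1−α_{ii})^{d−1} for i = 1, 2, and b_n(1,2) = b_n(2,1) = ρ₁₂ σ₁ σ₂ · C(d+n−2, n) · α₁₂^n (1−α₁₂)^{d−1}. Then for every n ∈ ℕ, det(b_n) > 0 if and only if ρ₁₂ < ( α₁₁ α₂₂ / α₁₂² )^{n/2} · ( (1−α₁₁)(1−α₂₂) / (1−α₁₂)² )^{(d−1)/2}. -/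
/-!
Writing `X = α₁₁α₂₂/α₁₂²` and `Y = (1−α₁₁)(1−α₂₂)/(1−α₁₂)²`, the determinant of `b_n` factors as
`(σ₁σ₂ C(d+n−2, n) α₁₂ⁿ (1−α₁₂)^{d−1})² · (Xⁿ Y^{d−1} − ρ₁₂²)`, so it is positive exactly when
`ρ₁₂² < Xⁿ Y^{d−1}`; taking square roots gives the bound.
-/

open Real

lemma lt_rpow_half_mul_rpow_half_iff {ρ x y a b : ℝ} (hρ : 0 ≤ ρ) (hx : 0 ≤ x) (hy : 0 ≤ y) :
    ρ < x ^ (a / 2) * y ^ (b / 2) ↔ ρ ^ 2 < x ^ a * y ^ b := by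
  have hsqrt : x ^ (a / 2) * y ^ (b / 2) = √(x ^ a * y ^ b) := by
    rw [sqrt_eq_rpow, mul_rpow (rpow_nonneg hx a) (rpow_nonneg hy b), ← rpow_mul hx,
      ← rpow_mul hy, mul_one_div, mul_one_div]
  rw [hsqrt, lt_sqrt hρ]

lemma det_schoenberg_fin_two {K : Type*} [Field K] (σ₁ σ₂ c ρ a₁ a₂ a b₁ b₂ b : K) (n m : ℕ)
    (ha : a ≠ 0) (hb : b ≠ 0) :
    !![σ₁ ^ 2 * c * a₁ ^ n * b₁ ^ m, ρ * σ₁ * σ₂ * c * a ^ n * b ^ m;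
        ρ * σ₁ * σ₂ * c * a ^ n * b ^ m, σ₂ ^ 2 * c * a₂ ^ n * b₂ ^ m].det
      = (σ₁ * σ₂ * c * a ^ n * b ^ m) ^ 2 *
          ((a₁ * a₂ / a ^ 2) ^ n * (b₁ * b₂ / b ^ 2) ^ m - ρ ^ 2) := by
  rw [Matrix.det_fin_two_of, div_pow, div_pow, ← pow_mul, ← pow_mul]
  field_simp
  ring

/-- For the matrix-valued `d`-Schoenberg coefficients `b_n` of the
bivariate multiquadratic family, `det(b_n) > 0` if and only if
`ρ₁₂ < (α₁₁α₂₂/α₁₂²)^{n/2} ((1−α₁₁)(1−α₂₂)/(1−α₁₂)²)^{(d−1)/2}`. -/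
theorem multiquadratic_det_pos_iff
    (d : ℕ) (hd : 2 ≤ d)
    (σ₁ σ₂ α₁₁ α₂₂ α₁₂ ρ₁₂ : ℝ)
    (hσ₁ : 0 < σ₁) (hσ₂ : 0 < σ₂)
    (hα₁₁ : α₁₁ ∈ Set.Ioo (0 : ℝ) 1) (hα₂₂ : α₂₂ ∈ Set.Ioo (0 : ℝ) 1)
    (hα₁₂ : α₁₂ ∈ Set.Ioo (0 : ℝ) 1) (hρ : ρ₁₂ ∈ Set.Ioo (0 : ℝ) 1) :
    ∀ n : ℕ,
      (0 < (!![σ₁ ^ 2 * (Nat.choose (d + n - 2) n) * α₁₁ ^ n * (1 - α₁₁) ^ (d - 1),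
          ρ₁₂ * σ₁ * σ₂ * (Nat.choose (d + n - 2) n) * α₁₂ ^ n * (1 - α₁₂) ^ (d - 1);
          ρ₁₂ * σ₁ * σ₂ * (Nat.choose (d + n - 2) n) * α₁₂ ^ n * (1 - α₁₂) ^ (d - 1),
          σ₂ ^ 2 * (Nat.choose (d + n - 2) n) * α₂₂ ^ n * (1 - α₂₂) ^ (d - 1)] :
        Matrix (Fin 2) (Fin 2) ℝ).det)
      ↔ ρ₁₂ < (α₁₁ * α₂₂ / α₁₂ ^ 2) ^ ((n : ℝ) / 2) *
          ((1 - α₁₁) * (1 - α₂₂) / (1 - α₁₂) ^ 2) ^ (((d : ℝ) - 1) / 2) := by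
  obtain ⟨hα₁₁0, hα₁₁1⟩ := hα₁₁
  obtain ⟨hα₂₂0, hα₂₂1⟩ := hα₂₂
  obtain ⟨hα₁₂0, hα₁₂1⟩ := hα₁₂
  intro n
  have hchoose : 0 < ((d + n - 2).choose n : ℝ) := by
    exact_mod_cast Nat.choose_pos (by omega)
  have hd_sub : (d : ℝ) - 1 = ((d - 1 : ℕ) : ℝ) := by
    rw [Nat.cast_sub (by omega), Nat.cast_one]
  have h₁₁ : 0 < 1 - α₁₁ := by linarith
  have h₂₂ : 0 < 1 - α₂₂ := by linarith
  have h₁₂ : 0 < 1 - α₁₂ := by linarith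
  rw [det_schoenberg_fin_two _ _ _ _ _ _ _ _ _ _ _ _ hα₁₂0.ne' h₁₂.ne',
    mul_pos_iff_of_pos_left (by positivity), sub_pos, hd_sub,
    lt_rpow_half_mul_rpow_half_iff hρ.1.le (by positivity) (by positivity),
    rpow_natCast, rpow_natCast]
end

section
/- Let b be a real symmetric positive definite 2×2 matrix and let Ī be the 2×2 matrix with entries Ī(1,1) = Ī(2,2) = 0 and Ī(1,2) = Ī(2,1) = 1. Let b^{-1/2} denote the inverse of the unique symmetric positive definite square root of b. Then the squared Frobenius norm of b^{-1/2} Ī b^{-1/2} satisfies ‖b^{-1/2} Ī b^{-1/2}‖_F² = 2 · ( b(1,1) b(2,2) + b(1,2)² ) / ( b(1,1) b(2,2) − b(1,2)² )². -/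
/-!
Writing `A = b^{-1/2}` and `J = Ī`, both symmetric, the squared Frobenius norm of `A J A` is
`tr (A J A A J A) = tr (J b⁻¹ J b⁻¹)` by cyclicity of the trace, so the square root drops out.
For a `2 × 2` matrix `b⁻¹ = det(b)⁻¹ • adj(b)`, and the trace is read off the adjugate.
-/

namespace Matrix

theorem sum_sq_eq_trace_mul_transpose {m n R : Type*} [Fintype m] [Fintype n] [CommSemiring R]
    (M : Matrix m n R) : ∑ i, ∑ j, M i j ^ 2 = (M * Mᵀ).trace := by
  simp only [trace, diag, mul_apply, transpose_apply, sq]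

theorem sum_sq_mul_mul_eq_trace {n R : Type*} [Fintype n] [CommSemiring R]
    {A J : Matrix n n R} (hA : A.IsSymm) (hJ : J.IsSymm) :
    ∑ i, ∑ j, (A * J * A) i j ^ 2 = (J * (A * A) * J * (A * A)).trace := by
  rw [sum_sq_eq_trace_mul_transpose, transpose_mul, transpose_mul, hA.eq, hJ.eq]
  rw [show A * J * A * (A * (J * A)) = A * (J * (A * A) * J * A) by simp only [Matrix.mul_assoc],
    trace_mul_comm]
  simp only [Matrix.mul_assoc]

theorem trace_swap_mul_inv_sq_fin_two {K : Type*} [Field K] (b : Matrix (Fin 2) (Fin 2) K)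
    (hb : b.IsSymm) :
    (!![0, 1; 1, 0] * b⁻¹ * !![0, 1; 1, 0] * b⁻¹).trace
      = 2 * (b 0 0 * b 1 1 + b 0 1 ^ 2) / (b 0 0 * b 1 1 - b 0 1 ^ 2) ^ 2 := by
  rw [inv_def, adjugate_fin_two, det_fin_two, Ring.inverse_eq_inv', hb.apply 0 1]
  simp only [trace_fin_two, mul_apply, Fin.sum_univ_two, smul_apply, smul_eq_mul, of_apply,
    cons_val', cons_val_zero, cons_val_one, cons_val_fin_one]
  -- `ring` treats `(d ^ 2)⁻¹` as an atom once `d ^ 2` is expanded, so we write it as `d⁻¹ ^ 2`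
  rw [div_eq_mul_inv, ← inv_pow]
  ring

end Matrix

theorem frobenius_sq_inv_sqrt_Ibar_general
    (b s : Matrix (Fin 2) (Fin 2) ℝ)
    (hs : s.PosDef)
    (hssq : s * s = b) :
    (∑ i : Fin 2, ∑ j : Fin 2, ((s⁻¹ * (!![0, 1; 1, 0] : Matrix (Fin 2) (Fin 2) ℝ) * s⁻¹) i j) ^ 2)
      = 2 * (b 0 0 * b 1 1 + (b 0 1) ^ 2) / (b 0 0 * b 1 1 - (b 0 1) ^ 2) ^ 2 := by
  have hs_symm : s.IsSymm := Matrix.isHermitian_iff_isSymm.mp hs.isHermitian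
  have hb_symm : b.IsSymm := by
    rw [← hssq, ← sq]
    exact hs_symm.pow 2
  have hJ : (!![0, 1; 1, 0] : Matrix (Fin 2) (Fin 2) ℝ).IsSymm :=
    Matrix.IsSymm.ext fun i j => by fin_cases i <;> fin_cases j <;> rfl
  rw [Matrix.sum_sq_mul_mul_eq_trace hs_symm.inv hJ, ← Matrix.mul_inv_rev, hssq]
  exact Matrix.trace_swap_mul_inv_sq_fin_two b hb_symm

/-- For a real symmetric positive definite `2×2` matrix `b` with
symmetric positive definite square root `s` (so `b^{-1/2} = s⁻¹`) and
`Ī = !![0,1;1,0]`, the squared Frobenius norm of `b^{-1/2} Ī b^{-1/2}` equals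
`2 (b₁₁ b₂₂ + b₁₂²)/(b₁₁ b₂₂ − b₁₂²)²`. -/
theorem frobenius_sq_inv_sqrt_Ibar
    (b s : Matrix (Fin 2) (Fin 2) ℝ)
    (hb : b.PosDef)
    (hs : s.PosDef)
    (hssq : s * s = b) :
    (∑ i : Fin 2, ∑ j : Fin 2, ((s⁻¹ * (!![0, 1; 1, 0] : Matrix (Fin 2) (Fin 2) ℝ) * s⁻¹) i j) ^ 2)
      = 2 * (b 0 0 * b 1 1 + (b 0 1) ^ 2) / (b 0 0 * b 1 1 - (b 0 1) ^ 2) ^ 2 :=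
  frobenius_sq_inv_sqrt_Ibar_general b s hs hssq
end

section
/- Let b₁ be a real symmetric positive definite 2×2 matrix, c ∈ ℝ, and let b₂ = b₁ + c·Ī, where Ī is the 2×2 matrix with zero diagonal and off-diagonal entries equal to 1 (so b₂ has the same diagonal as b₁). Define ξ_j = b_j(1,2) / √( b_j(1,1) · b_j(2,2) ) for j = 1, 2. Then ‖b₁^{-1/2} b₂ b₁^{-1/2} − I‖_F² = 2 (ξ₂ − ξ₁)² (1 + ξ₁²) / (1 − ξ₁²)², where b₁^{-1/2} is the inverse of the unique symmetric positive definite square root of b₁, I is the 2×2 identity matrix, and ‖·‖_F is the Frobenius norm. -/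
/-!
With `b₁ = s²`, the conjugation by `s⁻¹` sends `b₁` to `1`, so the matrix whose Frobenius norm
is taken is `c • s⁻¹ Ī s⁻¹`. As `s` is symmetric, its squared Frobenius norm is
`c² tr (Ī b₁⁻¹ Ī b₁⁻¹)`, which only involves the explicit inverse of the `2 × 2` matrix `b₁`.
Since `b₂` has the diagonal of `b₁`, `ξ₂ - ξ₁ = c / √(b₁(1,1) b₁(2,2))`, and the identity
becomes an identity of rational functions.
-/

open Matrix

namespace Matrix

theorem sum_sq_entries_eq_trace_mul_transpose {m n R : Type*} [Fintype m] [Fintype n]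
    [CommSemiring R] (M : Matrix m n R) : ∑ i, ∑ j, M i j ^ 2 = trace (M * Mᵀ) := by
  simp [trace, mul_apply, sq]

variable {n R : Type*} [Fintype n] [DecidableEq n] [CommRing R]

theorem inv_mul_add_mul_inv_sub_one_of_mul_self_eq {s b : Matrix n n R} (hs : IsUnit s)
    (hsb : s * s = b) (E : Matrix n n R) : s⁻¹ * (b + E) * s⁻¹ - 1 = s⁻¹ * E * s⁻¹ := by
  have hs' : IsUnit s.det := (isUnit_iff_isUnit_det s).1 hs
  have hconj : s⁻¹ * b * s⁻¹ = 1 := by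
    rw [← hsb, ← Matrix.mul_assoc, nonsing_inv_mul _ hs', Matrix.one_mul, mul_nonsing_inv _ hs']
  rw [Matrix.mul_add, Matrix.add_mul, hconj, add_sub_cancel_left]

theorem trace_conj_mul_transpose_of_mul_self_eq {s b : Matrix n n R} (hst : sᵀ = s)
    (hsb : s * s = b) (E : Matrix n n R) :
    trace (s⁻¹ * E * s⁻¹ * (s⁻¹ * E * s⁻¹)ᵀ) = trace (E * b⁻¹ * Eᵀ * b⁻¹) := by
  have hinv : s⁻¹ * s⁻¹ = b⁻¹ := by rw [← hsb, mul_inv_rev]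
  rw [transpose_mul, transpose_mul, transpose_nonsing_inv, hst]
  calc _ = trace (s⁻¹ * (E * (s⁻¹ * s⁻¹) * Eᵀ * s⁻¹)) := by simp only [Matrix.mul_assoc]
    _ = trace (E * (s⁻¹ * s⁻¹) * Eᵀ * s⁻¹ * s⁻¹) := trace_mul_comm _ _
    _ = trace (E * b⁻¹ * Eᵀ * b⁻¹) := by rw [Matrix.mul_assoc _ s⁻¹ s⁻¹, hinv]

theorem trace_swap_mul_inv_mul_swap_mul_inv_fin_two {K : Type*} [Field K]
    (b : Matrix (Fin 2) (Fin 2) K) :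
    trace (!![0, 1; 1, 0] * b⁻¹ * !![0, 1; 1, 0] * b⁻¹)
      = (b 0 1 ^ 2 + b 1 0 ^ 2 + 2 * (b 0 0 * b 1 1)) / (b 0 0 * b 1 1 - b 0 1 * b 1 0) ^ 2 := by
  rw [← det_fin_two, inv_def, Ring.inverse_eq_inv', adjugate_fin_two]
  simp only [Matrix.mul_smul, Matrix.smul_mul, trace_smul, mul_fin_two, trace_fin_two_of,
    smul_eq_mul]
  ring

end Matrix

theorem two_mul_sq_sub_mul_one_add_sq_div_one_sub_sq_sq {K : Type*} [Field K] {r : K}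
    (hr : r ≠ 0) (β c : K) :
    2 * ((β + c) / r - β / r) ^ 2 * (1 + (β / r) ^ 2) / (1 - (β / r) ^ 2) ^ 2
      = c ^ 2 * (2 * (r ^ 2 + β ^ 2) / (r ^ 2 - β ^ 2) ^ 2) := by
  have hr2 : r ^ 2 ≠ 0 := pow_ne_zero 2 hr
  rw [div_sub_div_same, add_sub_cancel_left, div_pow, div_pow, one_add_div hr2, one_sub_div hr2,
    div_pow]
  field_simp

/-- Let `b₁` be symmetric positive definite `2×2`, `b₂ = b₁ + c·Ī`
with `Ī = !![0,1;1,0]`, and `s` the symmetric positive definite square root of `b₁`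
(so `b₁^{-1/2} = s⁻¹`). With `ξ_j = b_j(1,2)/√(b_j(1,1) b_j(2,2))`,
`‖b₁^{-1/2} b₂ b₁^{-1/2} − I‖_F² = 2 (ξ₂ − ξ₁)² (1 + ξ₁²)/(1 − ξ₁²)²`. -/
theorem frobenius_sq_conjugated_difference
    (b₁ : Matrix (Fin 2) (Fin 2) ℝ) (c : ℝ)
    (hb₁ : b₁.PosDef)
    (s : Matrix (Fin 2) (Fin 2) ℝ)
    (hs : s.PosDef)
    (hssq : s * s = b₁) :
    let b₂ : Matrix (Fin 2) (Fin 2) ℝ := b₁ + c • (!![0, 1; 1, 0] : Matrix (Fin 2) (Fin 2) ℝ)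
    let ξ₁ : ℝ := b₁ 0 1 / Real.sqrt (b₁ 0 0 * b₁ 1 1)
    let ξ₂ : ℝ := b₂ 0 1 / Real.sqrt (b₂ 0 0 * b₂ 1 1)
    (∑ i : Fin 2, ∑ j : Fin 2, ((s⁻¹ * b₂ * s⁻¹ - 1) i j) ^ 2)
      = 2 * (ξ₂ - ξ₁) ^ 2 * (1 + ξ₁ ^ 2) / (1 - ξ₁ ^ 2) ^ 2 := by
  intro b₂ ξ₁ ξ₂
  have hsym : b₁ 1 0 = b₁ 0 1 := by simpa using hb₁.isHermitian.apply 0 1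
  have hst : sᵀ = s := hs.isHermitian
  have hĪ : (!![0, 1; 1, 0] : Matrix (Fin 2) (Fin 2) ℝ)ᵀ = !![0, 1; 1, 0] := by
    ext i j; fin_cases i <;> fin_cases j <;> rfl
  have hdiag : 0 < b₁ 0 0 * b₁ 1 1 := mul_pos hb₁.diag_pos hb₁.diag_pos
  have hr : Real.sqrt (b₁ 0 0 * b₁ 1 1) ≠ 0 := (Real.sqrt_pos.2 hdiag).ne'
  have hξ₂ : ξ₂ = (b₁ 0 1 + c) / Real.sqrt (b₁ 0 0 * b₁ 1 1) := by simp [ξ₂, b₂]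
  rw [hξ₂, two_mul_sq_sub_mul_one_add_sq_div_one_sub_sq_sq hr, Real.sq_sqrt hdiag.le,
    sum_sq_entries_eq_trace_mul_transpose,
    inv_mul_add_mul_inv_sub_one_of_mul_self_eq hs.isUnit hssq,
    trace_conj_mul_transpose_of_mul_self_eq hst hssq]
  simp only [transpose_smul, hĪ, Matrix.smul_mul, Matrix.mul_smul, trace_smul, smul_eq_mul]
  rw [trace_swap_mul_inv_mul_swap_mul_inv_fin_two, hsym]
  ring
end

section
/- Fix an integer d ≥ 2 and, for j = 1, 2, parameters σ₁^{(j)}, σ₂^{(j)} > 0, α₁₁^{(j)}, α₂₂^{(j)}, α₁₂^{(j)} ∈ (0,1), ρ^{(j)} ∈ (0,1) satisfying α₁₂^{(j)} ≤ √(α₁₁^{(j)} α₂₂^{(j)}) and ρ^{(j)} < ( (1−α₁₁^{(j)})(1−α₂₂^{(j)}) / (1−α₁₂^{(j)})² )^{(d−1)/2}. For l ∈ ℕ let b_l^{(j)} be the real 2×2 matrix with entries b_l^{(j)}(i,i) = (σ_i^{(j)})² · C(d+l−2, l) · (α_{ii}^{(j)})^l (1−α_{ii}^{(j)})^{d−1}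 for i = 1, 2, and b_l^{(j)}(1,2) = b_l^{(j)}(2,1) = ρ^{(j)} σ₁^{(j)} σ₂^{(j)} · C(d+l−2, l) · (α₁₂^{(j)})^l (1−α₁₂^{(j)})^{d−1}, and set h(l) = (2l+d−1)(l+d−2)!/(l!(d−1)!). Then Σ_{l=0}^∞ h(l) · ‖ (b_l^{(1)})^{-1/2} b_l^{(2)} (b_l^{(1)})^{-1/2} − I ‖_F² < ∞ if and only if: σ_i^{(1)} = σ_i^{(2)} and α_{ii}^{(1)} = α_{ii}^{(2)} =: α_{ii} for i = 1, 2, and moreover either (a) α₁₂^{(1)} < √(α₁₁ α₂₂) and α₁₂^{(2)} < √(α₁₁ α₂₂), or (b) α₁₂^{(1)} = α₁₂^{(2)} and ρ^{(1)} = ρ^{(2)}. -/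
/-- Dimension of the space of degree-`l` spherical harmonics on the `d`-dimensional
sphere: `h(l) = (2l+d−1)(l+d−2)!/(l!(d−1)!)`. -/
def sphHarmDim (d l : ℕ) : ℕ :=
  (2 * l + d - 1) * Nat.factorial (l + d - 2) / (Nat.factorial l * Nat.factorial (d - 1))

/-!
If `w = s v` with `s = b1^{1/2}`, then `⟪v, b2 v⟫ / ⟪v, b1 v⟫ - 1 = ⟪w, (M - 1) w⟫ / ‖w‖²` for
`M = s⁻¹ b2 s⁻¹`, so by Cauchy–Schwarz each diagonal ratio `b2(i,i) / b1(i,i)` lies within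
`‖M - 1‖_F` of `1`. Summability forces `‖M_l - 1‖_F → 0`, and the ratio `C_i (β_ii / α_ii)^l`
tends to `1` only when the marginal parameters agree.

Once the marginals agree, `b1 l` and `b2 l` have the same diagonal and their correlations are
`x_l = κ θ^l` and `y_l = κ' φ^l` with `θ = α₁₂ / √(α₁₁ α₂₂) ≤ 1`. A direct computation gives
`‖M_l - 1‖_F² = 2 (x_l - y_l)² (1 + x_l²) / (1 - x_l²)²`, comparable to `(x_l - y_l)²` because the
bound on `ρ` says exactly `κ < 1`. As `h(l)` grows polynomially, `∑ h(l) (x_l - y_l)²` converges iff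
`θ, φ < 1` or the two sequences coincide.
-/

open Filter Topology Matrix

theorem one_le_sphHarmDim {d : ℕ} (hd : 2 ≤ d) (l : ℕ) : 1 ≤ sphHarmDim d l := by
  rw [sphHarmDim, Nat.one_le_div_iff (by positivity)]
  obtain ⟨k, rfl⟩ : ∃ k, d = k + 2 := ⟨d - 2, by omega⟩
  rw [show l + (k + 2) - 2 = l + k by omega, show k + 2 - 1 = k + 1 by omega, Nat.factorial_succ]
  calc l.factorial * ((k + 1) * k.factorial) = (k + 1) * (l.factorial * k.factorial) := by ring
    _ ≤ (2 * l + (k + 2) - 1) * (l + k).factorial :=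
      Nat.mul_le_mul (by omega)
        (Nat.le_of_dvd (by positivity) (Nat.factorial_mul_factorial_dvd_factorial_add l k))

theorem sphHarmDim_le (d l : ℕ) : sphHarmDim d l ≤ 2 * (l + d) ^ (d + 1) := by
  refine Nat.div_le_of_le_mul ?_
  have hfac : (l + d - 2).factorial ≤ l.factorial * (l + d) ^ d := by
    calc (l + d - 2).factorial ≤ (l + d).factorial := Nat.factorial_le (by omega)
      _ = l.factorial * (l + d).descFactorial d := by
        rw [← Nat.factorial_mul_descFactorial (by omega : d ≤ l + d), Nat.add_sub_cancel]
      _ ≤ l.factorial * (l + d) ^ d := Nat.mul_le_mul_left _ (Nat.descFactorial_le_pow _ _)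
  calc (2 * l + d - 1) * (l + d - 2).factorial ≤ (2 * (l + d)) * (l.factorial * (l + d) ^ d) :=
        Nat.mul_le_mul (by omega) hfac
    _ = l.factorial * 1 * (2 * (l + d) ^ (d + 1)) := by ring
    _ ≤ l.factorial * (d - 1).factorial * (2 * (l + d) ^ (d + 1)) :=
        Nat.mul_le_mul_right _ (Nat.mul_le_mul_left _ (Nat.factorial_pos _))

theorem summable_sphHarmDim_mul_pow (d : ℕ) {θ : ℝ} (h0 : 0 < θ) (h1 : θ < 1) :
    Summable fun l => (sphHarmDim d l : ℝ) * θ ^ l := by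
  have hgeom : Summable fun l : ℕ => ((l + d : ℕ) : ℝ) ^ (d + 1) * θ ^ (l + d) :=
    (summable_nat_add_iff (f := fun n : ℕ => (n : ℝ) ^ (d + 1) * θ ^ n) d).2 <|
      summable_pow_mul_geometric_of_norm_lt_one (d + 1) (by rwa [Real.norm_of_nonneg h0.le])
  refine Summable.of_nonneg_of_le (fun l => by positivity) (fun l => ?_)
    (hgeom.mul_left (2 / θ ^ d))
  have hle : (sphHarmDim d l : ℝ) ≤ 2 * ((l + d : ℕ) : ℝ) ^ (d + 1) := by
    exact_mod_cast sphHarmDim_le d l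
  calc (sphHarmDim d l : ℝ) * θ ^ l ≤ 2 * ((l + d : ℕ) : ℝ) ^ (d + 1) * θ ^ l := by gcongr
    _ = 2 / θ ^ d * (((l + d : ℕ) : ℝ) ^ (d + 1) * θ ^ (l + d)) := by field_simp; ring

theorem tendsto_zero_of_summable_sphHarmDim_mul {d : ℕ} (hd : 2 ≤ d) {u : ℕ → ℝ}
    (hu : ∀ l, 0 ≤ u l) (h : Summable fun l => (sphHarmDim d l : ℝ) * u l) :
    Tendsto u atTop (𝓝 0) :=
  squeeze_zero hu (fun l => le_mul_of_one_le_left (hu l) (by exact_mod_cast one_le_sphHarmDim hd l))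
    h.tendsto_atTop_zero

theorem tendsto_zero_of_tendsto_sq {f : ℕ → ℝ} (h : Tendsto (fun l => f l ^ 2) atTop (𝓝 0)) :
    Tendsto f atTop (𝓝 0) := by
  refine (tendsto_zero_iff_abs_tendsto_zero f).2 ?_
  simpa only [Real.sqrt_sq_eq_abs, Real.sqrt_zero, Function.comp_def] using h.sqrt

theorem eq_one_of_tendsto_mul_pow {C r : ℝ} (hC : 0 < C) (hr : 0 < r)
    (h : Tendsto (fun l : ℕ => C * r ^ l) atTop (𝓝 1)) : r = 1 ∧ C = 1 := by
  obtain hr1 | rfl | hr1 := lt_trichotomy r 1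
  · have h0 := (tendsto_pow_atTop_nhds_zero_of_lt_one hr.le hr1).const_mul C
    rw [mul_zero] at h0
    exact absurd (tendsto_nhds_unique h h0) one_ne_zero
  · simp only [one_pow, mul_one, tendsto_const_nhds_iff] at h
    exact ⟨rfl, h⟩
  · have htop := (tendsto_pow_atTop_atTop_of_one_lt hr1).const_mul_atTop hC
    obtain ⟨l, hl2, hl1⟩ :=
      ((htop.eventually_gt_atTop 2).and (h.eventually_lt_const one_lt_two)).exists
    linarith

theorem Matrix.sq_dotProduct_mulVec_le {n : Type*} [Fintype n] (N : Matrix n n ℝ) (w : n → ℝ) :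
    (w ⬝ᵥ N *ᵥ w) ^ 2 ≤ (∑ i, ∑ j, N i j ^ 2) * (w ⬝ᵥ w) ^ 2 := by
  have hquad : w ⬝ᵥ N *ᵥ w = ∑ i, ∑ j, N i j * (w i * w j) := by
    simp only [dotProduct, mulVec, Finset.mul_sum]
    exact Finset.sum_congr rfl fun i _ => Finset.sum_congr rfl fun j _ => by ring
  have hnorm : (w ⬝ᵥ w) ^ 2 = ∑ i, ∑ j, (w i * w j) ^ 2 := by
    simp only [dotProduct, sq, Finset.sum_mul_sum, mul_mul_mul_comm]
  simpa only [Fintype.sum_prod_type, ← hquad, ← hnorm] using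
    Finset.sum_mul_sq_le_sq_mul_sq Finset.univ (fun p : n × n => N p.1 p.2) (fun p => w p.1 * w p.2)

theorem Matrix.PosDef.sq_div_diag_sub_one_le {n : Type*} [Fintype n] [DecidableEq n]
    {s : Matrix n n ℝ} (hs : s.PosDef) (B : Matrix n n ℝ) (i : n) :
    (B i i / (s * s) i i - 1) ^ 2 ≤ ∑ j, ∑ k, ((s⁻¹ * B * s⁻¹ - 1) j k) ^ 2 := by
  have hsT : sᵀ = s := hs.isHermitian
  have hu : IsUnit s.det := (isUnit_iff_isUnit_det s).1 hs.isUnit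
  set w := s *ᵥ Pi.single i 1 with hw
  have hquad (M : Matrix n n ℝ) : w ⬝ᵥ M *ᵥ w = (s * M * s) i i := by
    rw [dotProduct_mulVec, vecMul_mulVec, hsT, ← dotProduct_mulVec, mulVec_mulVec]
    simp
  have hww : (s * s) i i = w ⬝ᵥ w := by simpa using (hquad 1).symm
  have hBw : B i i - (s * s) i i = w ⬝ᵥ (s⁻¹ * B * s⁻¹ - 1) *ᵥ w := by
    rw [hquad, Matrix.mul_sub, Matrix.sub_mul, ← Matrix.mul_assoc, ← Matrix.mul_assoc,
      mul_nonsing_inv _ hu, Matrix.one_mul, Matrix.mul_assoc, nonsing_inv_mul _ hu]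
    simp
  have hpos : 0 < w ⬝ᵥ w := by
    have hw0 : w ≠ 0 := by
      rw [hw, Ne, ← mulVec_zero s, (mulVec_injective_iff_isUnit.2 hs.isUnit).eq_iff]
      simp
    simpa using dotProduct_star_self_pos_iff.2 hw0
  calc (B i i / (s * s) i i - 1) ^ 2 = (w ⬝ᵥ (s⁻¹ * B * s⁻¹ - 1) *ᵥ w) ^ 2 / (w ⬝ᵥ w) ^ 2 := by
        rw [← hBw, ← hww, div_sub_one (hww ▸ hpos).ne', div_pow]
    _ ≤ _ := div_le_of_le_mul₀ (by positivity) (by positivity) (sq_dotProduct_mulVec_le _ _)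

theorem tendsto_div_diag_of_tendsto_sum_sq {n : Type*} [Fintype n] [DecidableEq n]
    {s B : ℕ → Matrix n n ℝ} (hs : ∀ l, (s l).PosDef)
    (h : Tendsto (fun l => ∑ j, ∑ k, ((s l)⁻¹ * B l * (s l)⁻¹ - 1) j k ^ 2) atTop (𝓝 0)) (i : n) :
    Tendsto (fun l => B l i i / (s l * s l) i i) atTop (𝓝 1) := by
  have := tendsto_zero_of_tendsto_sq <|
    squeeze_zero (fun l => sq_nonneg _) (fun l => (hs l).sq_div_diag_sub_one_le (B l) i) h
  simpa using this.add_const 1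

theorem Matrix.sum_sq_conj_inv_sub_one_eq_trace {n : Type*} [Fintype n] [DecidableEq n]
    {s B : Matrix n n ℝ} (hsT : sᵀ = s) (hBT : Bᵀ = B) (hs : IsUnit s.det) :
    ∑ i, ∑ j, ((s⁻¹ * B * s⁻¹ - 1) i j) ^ 2 = trace (((s * s)⁻¹ * B - 1) ^ 2) := by
  set N := s⁻¹ * B * s⁻¹ - 1
  set K := (s * s)⁻¹ * B - 1
  have hNT : Nᵀ = N := by simp [N, transpose_nonsing_inv, hsT, hBT, Matrix.mul_assoc]
  have hconj : N * N = s * (K * K) * s⁻¹ := by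
    have : N = s * K * s⁻¹ := by
      simp only [N, K]
      rw [Matrix.mul_inv_rev, Matrix.mul_sub, Matrix.sub_mul, ← Matrix.mul_assoc,
        ← Matrix.mul_assoc, mul_nonsing_inv _ hs, Matrix.one_mul, Matrix.mul_one,
        mul_nonsing_inv _ hs]
    rw [this]
    simp only [Matrix.mul_assoc]
    rw [← Matrix.mul_assoc s⁻¹ s, nonsing_inv_mul _ hs, Matrix.one_mul]
  calc ∑ i, ∑ j, N i j ^ 2 = trace (N * Nᵀ) := by simp [trace, mul_apply, sq]
    _ = trace (K ^ 2) := by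
      rw [hNT, hconj, trace_mul_comm, ← Matrix.mul_assoc, nonsing_inv_mul _ hs, Matrix.one_mul, sq]

/-- `‖R_x^{-1/2} R_y R_x^{-1/2} - 1‖_F²` for the correlation matrices `R_x = !![1, x; x, 1]`. -/
noncomputable def corrDeviation (x y : ℝ) : ℝ :=
  2 * (x - y) ^ 2 * ((1 + x ^ 2) / (1 - x ^ 2) ^ 2)

theorem Matrix.PosDef.sum_sq_conj_inv_sub_one_eq_corrDeviation {s : Matrix (Fin 2) (Fin 2) ℝ}
    (hs : s.PosDef) {a₁ a₂ m x y : ℝ} (hm : m ≠ 0) (ha : a₁ * a₂ = m ^ 2)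
    (hss : s * s = !![a₁, m * x; m * x, a₂]) :
    ∑ i, ∑ j, ((s⁻¹ * !![a₁, m * y; m * y, a₂] * s⁻¹ - 1) i j) ^ 2 = corrDeviation x y := by
  have hu : IsUnit s.det := (isUnit_iff_isUnit_det s).1 hs.isUnit
  have hsT : sᵀ = s := hs.isHermitian
  have hx : 1 - x ^ 2 ≠ 0 := by
    have h := congrArg det hss
    rw [det_mul, det_fin_two_of] at h
    refine right_ne_zero_of_mul (a := m ^ 2) ?_
    rw [show m ^ 2 * (1 - x ^ 2) = s.det * s.det by rw [h]; linear_combination -ha]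
    exact mul_ne_zero hu.ne_zero hu.ne_zero
  have ha₁ : a₁ ≠ 0 := left_ne_zero_of_mul (ha ▸ pow_ne_zero 2 hm)
  obtain rfl : a₂ = m ^ 2 / a₁ := by field_simp; linear_combination ha
  rw [sum_sq_conj_inv_sub_one_eq_trace hsT (by ext i j; fin_cases i <;> fin_cases j <;> rfl) hu,
    hss, inv_def, adjugate_fin_two_of, det_fin_two_of, Ring.inverse_eq_inv', trace_fin_two]
  simp [corrDeviation, sq, mul_apply, Fin.sum_univ_two, one_apply]
  field_simp
  ring

theorem two_mul_sq_sub_le_corrDeviation {x : ℝ} (y : ℝ) (hx : x ^ 2 < 1) :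
    2 * (x - y) ^ 2 ≤ corrDeviation x y := by
  have h1 : 1 ≤ (1 + x ^ 2) / (1 - x ^ 2) ^ 2 := (one_le_div (by nlinarith)).2 (by nlinarith)
  unfold corrDeviation
  nlinarith [sq_nonneg (x - y)]

theorem corrDeviation_le {x κ : ℝ} (y : ℝ) (h0 : 0 ≤ x) (hxκ : x ≤ κ) (hκ : κ < 1) :
    corrDeviation x y ≤ 4 / (1 - κ ^ 2) ^ 2 * (x - y) ^ 2 := by
  have hx2 : x ^ 2 ≤ κ ^ 2 := pow_le_pow_left₀ h0 hxκ 2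
  have hκ2 : κ ^ 2 < 1 := by nlinarith
  have h2 : (1 + x ^ 2) / (1 - x ^ 2) ^ 2 ≤ 2 / (1 - κ ^ 2) ^ 2 :=
    div_le_div₀ (by norm_num) (by nlinarith) (by nlinarith) (by gcongr)
  calc corrDeviation x y ≤ 2 * (x - y) ^ 2 * (2 / (1 - κ ^ 2) ^ 2) := by
        unfold corrDeviation; gcongr
    _ = _ := by ring

theorem summable_mul_corrDeviation_iff {w x y : ℕ → ℝ} {κ : ℝ} (hw : ∀ l, 0 ≤ w l)
    (hx : ∀ l, 0 ≤ x l ∧ x l ≤ κ) (hκ : κ < 1) :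
    Summable (fun l => w l * corrDeviation (x l) (y l)) ↔
      Summable (fun l => w l * (x l - y l) ^ 2) := by
  have hx2 (l : ℕ) : x l ^ 2 < 1 := by nlinarith [hx l]
  constructor
  · refine fun h => Summable.of_nonneg_of_le (fun l => mul_nonneg (hw l) (sq_nonneg _))
      (fun l => ?_) (h.mul_left (1 / 2))
    have := mul_le_mul_of_nonneg_left (two_mul_sq_sub_le_corrDeviation (y l) (hx2 l)) (hw l)
    linarith
  · refine fun h => Summable.of_nonneg_of_le
      (fun l => mul_nonneg (hw l) ((mul_nonneg (by norm_num) (sq_nonneg _)).trans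
        (two_mul_sq_sub_le_corrDeviation (y l) (hx2 l))))
      (fun l => ?_) (h.mul_left (4 / (1 - κ ^ 2) ^ 2))
    have := mul_le_mul_of_nonneg_left (corrDeviation_le (y l) (hx l).1 (hx l).2 hκ) (hw l)
    linarith

theorem summable_sphHarmDim_mul_sq_sub_iff {d : ℕ} (hd : 2 ≤ d) {κ κ' θ φ : ℝ} (hκ : 0 < κ)
    (hκ' : 0 < κ') (hθ : θ ∈ Set.Ioc 0 1) (hφ : φ ∈ Set.Ioc 0 1) :
    Summable (fun l => (sphHarmDim d l : ℝ) * (κ * θ ^ l - κ' * φ ^ l) ^ 2) ↔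
      (θ < 1 ∧ φ < 1) ∨ (θ = φ ∧ κ = κ') := by
  constructor
  · intro h
    have hlim := tendsto_zero_of_tendsto_sq
      (tendsto_zero_of_summable_sphHarmDim_mul hd (fun l => sq_nonneg _) h)
    have hpow {r : ℝ} (hr : 0 < r) (hr1 : r < 1) := tendsto_pow_atTop_nhds_zero_of_lt_one hr.le hr1
    rcases hθ.2.lt_or_eq with hθ1 | rfl <;> rcases hφ.2.lt_or_eq with hφ1 | rfl
    · exact Or.inl ⟨hθ1, hφ1⟩
    · simp only [one_pow, mul_one] at hlim
      have := ((hpow hθ.1 hθ1).const_mul κ).sub_const κ'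
      simp only [mul_zero, zero_sub] at this
      exact absurd (tendsto_nhds_unique this hlim) (neg_ne_zero.2 hκ'.ne')
    · simp only [one_pow, mul_one] at hlim
      have := (hpow hφ.1 hφ1).const_mul κ' |>.const_sub κ
      simp only [mul_zero, sub_zero] at this
      exact absurd (tendsto_nhds_unique this hlim) hκ.ne'
    · simp only [one_pow, mul_one, tendsto_const_nhds_iff, sub_eq_zero] at hlim
      exact Or.inr ⟨rfl, hlim⟩
  · rintro (⟨hθ1, hφ1⟩ | ⟨rfl, rfl⟩)
    · have hsq {r : ℝ} (hr : 0 < r) (hr1 : r < 1) :=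
        summable_sphHarmDim_mul_pow d (pow_pos hr 2) (pow_lt_one₀ hr.le hr1 two_ne_zero)
      refine Summable.of_nonneg_of_le (fun l => by positivity) (fun l => ?_)
        (((hsq hθ.1 hθ1).mul_left (2 * κ ^ 2)).add ((hsq hφ.1 hφ1).mul_left (2 * κ' ^ 2)))
      have := sq_nonneg (κ * θ ^ l + κ' * φ ^ l)
      have hh : (0 : ℝ) ≤ sphHarmDim d l := Nat.cast_nonneg _
      have e (r : ℝ) : (r ^ 2) ^ l = (r ^ l) ^ 2 := by ring
      rw [e, e]
      nlinarith [mul_nonneg hh this]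
    · simp

theorem marginal_eq_of_tendsto_ratio {σ τ α β : ℝ} {k : ℕ} {c : ℕ → ℝ} (hσ : 0 < σ) (hτ : 0 < τ)
    (hα : α ∈ Set.Ioo 0 1) (hβ : β ∈ Set.Ioo 0 1) (hc : ∀ l, c l ≠ 0)
    (h : Tendsto (fun l => τ ^ 2 * c l * β ^ l * (1 - β) ^ k / (σ ^ 2 * c l * α ^ l * (1 - α) ^ k))
      atTop (𝓝 1)) :
    σ = τ ∧ α = β := by
  have hα' : 0 < (1 - α) ^ k := pow_pos (sub_pos.2 hα.2) _
  have hβ' : 0 < (1 - β) ^ k := pow_pos (sub_pos.2 hβ.2) _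
  have hfun : (fun l => τ ^ 2 * c l * β ^ l * (1 - β) ^ k / (σ ^ 2 * c l * α ^ l * (1 - α) ^ k)) =
      fun l => τ ^ 2 * (1 - β) ^ k / (σ ^ 2 * (1 - α) ^ k) * (β / α) ^ l := by
    funext l
    have := hc l
    have := hα.1.ne'
    rw [div_pow]
    field_simp
  rw [hfun] at h
  obtain ⟨hr, hC⟩ := eq_one_of_tendsto_mul_pow (by positivity) (div_pos hβ.1 hα.1) h
  obtain rfl : β = α := (div_eq_one_iff_eq hα.1.ne').1 hr
  rw [div_eq_one_iff_eq (by positivity), mul_left_inj' hα'.ne'] at hC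
  exact ⟨(pow_left_inj₀ hσ.le hτ.le two_ne_zero).1 hC.symm, rfl⟩

theorem sq_rpow_sub_one_div_two {d : ℕ} (hd : 1 ≤ d) {y : ℝ} (hy : 0 ≤ y) :
    (y ^ 2) ^ (((d : ℝ) - 1) / 2) = y ^ (d - 1) := by
  rw [← Real.rpow_natCast y 2, ← Real.rpow_mul hy, ← Real.rpow_natCast y (d - 1)]
  congr 1
  push_cast [Nat.cast_sub hd]
  ring

theorem mul_div_sqrt_pow_lt_one {d : ℕ} (hd : 1 ≤ d) {a₁ a₂ a ρ : ℝ} (ha₁ : a₁ < 1)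
    (ha₂ : a₂ < 1) (ha : a < 1)
    (hρ : ρ < ((1 - a₁) * (1 - a₂) / (1 - a) ^ 2) ^ (((d : ℝ) - 1) / 2)) :
    ρ * (1 - a) ^ (d - 1) / Real.sqrt ((1 - a₁) * (1 - a₂)) ^ (d - 1) < 1 := by
  have hQ : 0 < (1 - a₁) * (1 - a₂) := mul_pos (sub_pos.2 ha₁) (sub_pos.2 ha₂)
  have hg : 0 < Real.sqrt ((1 - a₁) * (1 - a₂)) := Real.sqrt_pos.2 hQ
  have h : 0 < 1 - a := sub_pos.2 ha
  rw [div_lt_one (by positivity), ← lt_div_iff₀ (by positivity), ← div_pow,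
    ← sq_rpow_sub_one_div_two hd (div_pos hg h).le, div_pow, Real.sq_sqrt hQ.le]
  exact hρ

theorem summable_iff_of_marginals_eq {d : ℕ} (hd : 2 ≤ d) {σ₁ σ₂ α₁₁ α₂₂ α₁₂ ρ β₁₂ ϱ : ℝ}
    (hσ₁ : 0 < σ₁) (hσ₂ : 0 < σ₂) (hα₁₁ : α₁₁ ∈ Set.Ioo (0 : ℝ) 1)
    (hα₂₂ : α₂₂ ∈ Set.Ioo (0 : ℝ) 1) (hα₁₂ : α₁₂ ∈ Set.Ioo (0 : ℝ) 1) (hρ : 0 < ρ)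
    (hβ₁₂ : β₁₂ ∈ Set.Ioo (0 : ℝ) 1) (hϱ : 0 < ϱ)
    (hcross₁ : α₁₂ ≤ Real.sqrt (α₁₁ * α₂₂)) (hcross₂ : β₁₂ ≤ Real.sqrt (α₁₁ * α₂₂))
    (hρbound : ρ < ((1 - α₁₁) * (1 - α₂₂) / (1 - α₁₂) ^ 2) ^ (((d : ℝ) - 1) / 2))
    {b1 b2 s : ℕ → Matrix (Fin 2) (Fin 2) ℝ}
    (hb1 : ∀ l : ℕ, b1 l =
      !![σ₁ ^ 2 * (Nat.choose (d + l - 2) l) * α₁₁ ^ l * (1 - α₁₁) ^ (d - 1),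
         ρ * σ₁ * σ₂ * (Nat.choose (d + l - 2) l) * α₁₂ ^ l * (1 - α₁₂) ^ (d - 1);
         ρ * σ₁ * σ₂ * (Nat.choose (d + l - 2) l) * α₁₂ ^ l * (1 - α₁₂) ^ (d - 1),
         σ₂ ^ 2 * (Nat.choose (d + l - 2) l) * α₂₂ ^ l * (1 - α₂₂) ^ (d - 1)])
    (hb2 : ∀ l : ℕ, b2 l =
      !![σ₁ ^ 2 * (Nat.choose (d + l - 2) l) * α₁₁ ^ l * (1 - α₁₁) ^ (d - 1),
         ϱ * σ₁ * σ₂ * (Nat.choose (d + l - 2) l) * β₁₂ ^ l * (1 - β₁₂) ^ (d - 1);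
         ϱ * σ₁ * σ₂ * (Nat.choose (d + l - 2) l) * β₁₂ ^ l * (1 - β₁₂) ^ (d - 1),
         σ₂ ^ 2 * (Nat.choose (d + l - 2) l) * α₂₂ ^ l * (1 - α₂₂) ^ (d - 1)])
    (hs : ∀ l, (s l).PosDef) (hssq : ∀ l, s l * s l = b1 l) :
    Summable (fun l : ℕ => (sphHarmDim d l : ℝ) *
        ∑ i : Fin 2, ∑ j : Fin 2, (((s l)⁻¹ * b2 l * (s l)⁻¹ - 1) i j) ^ 2)
      ↔ (α₁₂ < Real.sqrt (α₁₁ * α₂₂) ∧ β₁₂ < Real.sqrt (α₁₁ * α₂₂)) ∨ (α₁₂ = β₁₂ ∧ ρ = ϱ) := by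
  set r := Real.sqrt (α₁₁ * α₂₂)
  set g := Real.sqrt ((1 - α₁₁) * (1 - α₂₂))
  have hP : 0 < α₁₁ * α₂₂ := mul_pos hα₁₁.1 hα₂₂.1
  have hQ : 0 < (1 - α₁₁) * (1 - α₂₂) := mul_pos (sub_pos.2 hα₁₁.2) (sub_pos.2 hα₂₂.2)
  have hr : 0 < r := Real.sqrt_pos.2 hP
  have hg : 0 < g := Real.sqrt_pos.2 hQ
  have hc (l : ℕ) : (0 : ℝ) < Nat.choose (d + l - 2) l := Nat.cast_pos.2 (Nat.choose_pos (by omega))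
  have h₁₂ : 0 < 1 - α₁₂ := sub_pos.2 hα₁₂.2
  have h₁₂' : 0 < 1 - β₁₂ := sub_pos.2 hβ₁₂.2
  set m : ℕ → ℝ := fun l => σ₁ * σ₂ * Nat.choose (d + l - 2) l * g ^ (d - 1) * r ^ l
  set κ := ρ * (1 - α₁₂) ^ (d - 1) / g ^ (d - 1)
  set κ' := ϱ * (1 - β₁₂) ^ (d - 1) / g ^ (d - 1)
  set θ := α₁₂ / r
  set φ := β₁₂ / r
  have hoff {ε γ : ℝ} (l : ℕ) :
      ε * σ₁ * σ₂ * (Nat.choose (d + l - 2) l) * γ ^ l * (1 - γ) ^ (d - 1) =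
        m l * (ε * (1 - γ) ^ (d - 1) / g ^ (d - 1) * (γ / r) ^ l) := by
    simp only [m]; rw [div_pow]; field_simp
  have hdiag (l : ℕ) : σ₁ ^ 2 * (Nat.choose (d + l - 2) l) * α₁₁ ^ l * (1 - α₁₁) ^ (d - 1) *
      (σ₂ ^ 2 * (Nat.choose (d + l - 2) l) * α₂₂ ^ l * (1 - α₂₂) ^ (d - 1)) = m l ^ 2 := by
    rw [show m l ^ 2 = (σ₁ * σ₂ * Nat.choose (d + l - 2) l) ^ 2 * (g ^ 2) ^ (d - 1) * (r ^ 2) ^ l by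
      ring, Real.sq_sqrt hP.le, Real.sq_sqrt hQ.le, mul_pow (1 - α₁₁), mul_pow α₁₁]
    ring
  have hF (l : ℕ) : ∑ i : Fin 2, ∑ j : Fin 2, (((s l)⁻¹ * b2 l * (s l)⁻¹ - 1) i j) ^ 2 =
      corrDeviation (κ * θ ^ l) (κ' * φ ^ l) := by
    rw [hb2 l, hoff]
    have := hc l
    exact (hs l).sum_sq_conj_inv_sub_one_eq_corrDeviation (by positivity) (hdiag l)
      (by rw [hssq, hb1, hoff])
  have hκ : 0 < κ := by positivity
  have hκ1 : κ < 1 := mul_div_sqrt_pow_lt_one (by omega) hα₁₁.2 hα₂₂.2 hα₁₂.2 hρbound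
  have hθ : θ ∈ Set.Ioc 0 1 := ⟨div_pos hα₁₂.1 hr, (div_le_one hr).2 hcross₁⟩
  have hφ : φ ∈ Set.Ioc 0 1 := ⟨div_pos hβ₁₂.1 hr, (div_le_one hr).2 hcross₂⟩
  have hx (l : ℕ) : 0 ≤ κ * θ ^ l ∧ κ * θ ^ l ≤ κ :=
    ⟨mul_nonneg hκ.le (pow_nonneg hθ.1.le l),
      mul_le_of_le_one_right hκ.le (pow_le_one₀ hθ.1.le hθ.2)⟩
  rw [summable_congr fun l => by rw [hF l],
    summable_mul_corrDeviation_iff (fun l => Nat.cast_nonneg _) hx hκ1,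
    summable_sphHarmDim_mul_sq_sub_iff hd hκ (by positivity) hθ hφ]
  have hθφ : θ = φ ↔ α₁₂ = β₁₂ := div_left_inj' hr.ne'
  have hκκ' (h : α₁₂ = β₁₂) : κ = κ' ↔ ρ = ϱ := by
    simp only [κ, κ', h]
    rw [div_left_inj' (by positivity), mul_left_inj' (by positivity)]
  exact or_congr (and_congr (div_lt_one hr) (div_lt_one hr))
    ⟨fun ⟨h₁, h₂⟩ => ⟨hθφ.1 h₁, (hκκ' (hθφ.1 h₁)).1 h₂⟩, fun ⟨h₁, h₂⟩ => ⟨hθφ.2 h₁, (hκκ' h₁).2 h₂⟩⟩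

theorem multiquadratic_equivalence_iff_general
    (d : ℕ) (hd : 2 ≤ d)
    (σ₁ σ₂ α₁₁ α₂₂ α₁₂ ρ : ℝ)
    (τ₁ τ₂ β₁₁ β₂₂ β₁₂ ϱ : ℝ)
    (hσ₁ : 0 < σ₁) (hσ₂ : 0 < σ₂) (hτ₁ : 0 < τ₁) (hτ₂ : 0 < τ₂)
    (hα₁₁ : α₁₁ ∈ Set.Ioo (0 : ℝ) 1) (hα₂₂ : α₂₂ ∈ Set.Ioo (0 : ℝ) 1)
    (hα₁₂ : α₁₂ ∈ Set.Ioo (0 : ℝ) 1) (hρ : ρ ∈ Set.Ioo (0 : ℝ) 1)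
    (hβ₁₁ : β₁₁ ∈ Set.Ioo (0 : ℝ) 1) (hβ₂₂ : β₂₂ ∈ Set.Ioo (0 : ℝ) 1)
    (hβ₁₂ : β₁₂ ∈ Set.Ioo (0 : ℝ) 1) (hϱ : ϱ ∈ Set.Ioo (0 : ℝ) 1)
    (hcross₁ : α₁₂ ≤ Real.sqrt (α₁₁ * α₂₂))
    (hcross₂ : β₁₂ ≤ Real.sqrt (β₁₁ * β₂₂))
    (hρbound : ρ < ((1 - α₁₁) * (1 - α₂₂) / (1 - α₁₂) ^ 2) ^ (((d : ℝ) - 1) / 2))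
    (b1 b2 : ℕ → Matrix (Fin 2) (Fin 2) ℝ)
    (hb1 : ∀ l : ℕ, b1 l =
      !![σ₁ ^ 2 * (Nat.choose (d + l - 2) l) * α₁₁ ^ l * (1 - α₁₁) ^ (d - 1),
         ρ * σ₁ * σ₂ * (Nat.choose (d + l - 2) l) * α₁₂ ^ l * (1 - α₁₂) ^ (d - 1);
         ρ * σ₁ * σ₂ * (Nat.choose (d + l - 2) l) * α₁₂ ^ l * (1 - α₁₂) ^ (d - 1),
         σ₂ ^ 2 * (Nat.choose (d + l - 2) l) * α₂₂ ^ l * (1 - α₂₂) ^ (d - 1)])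
    (hb2 : ∀ l : ℕ, b2 l =
      !![τ₁ ^ 2 * (Nat.choose (d + l - 2) l) * β₁₁ ^ l * (1 - β₁₁) ^ (d - 1),
         ϱ * τ₁ * τ₂ * (Nat.choose (d + l - 2) l) * β₁₂ ^ l * (1 - β₁₂) ^ (d - 1);
         ϱ * τ₁ * τ₂ * (Nat.choose (d + l - 2) l) * β₁₂ ^ l * (1 - β₁₂) ^ (d - 1),
         τ₂ ^ 2 * (Nat.choose (d + l - 2) l) * β₂₂ ^ l * (1 - β₂₂) ^ (d - 1)])
    (s : ℕ → Matrix (Fin 2) (Fin 2) ℝ)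
    (hs : ∀ l, (s l).PosDef)
    (hssq : ∀ l, s l * s l = b1 l) :
    Summable (fun l : ℕ => (sphHarmDim d l : ℝ) *
        ∑ i : Fin 2, ∑ j : Fin 2, (((s l)⁻¹ * b2 l * (s l)⁻¹ - 1) i j) ^ 2)
      ↔ (σ₁ = τ₁ ∧ σ₂ = τ₂ ∧ α₁₁ = β₁₁ ∧ α₂₂ = β₂₂ ∧
          ((α₁₂ < Real.sqrt (α₁₁ * α₂₂) ∧ β₁₂ < Real.sqrt (α₁₁ * α₂₂)) ∨
            (α₁₂ = β₁₂ ∧ ρ = ϱ))) := by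
  have hmarginals (h : Summable fun l : ℕ => (sphHarmDim d l : ℝ) *
      ∑ i : Fin 2, ∑ j : Fin 2, (((s l)⁻¹ * b2 l * (s l)⁻¹ - 1) i j) ^ 2) :
      σ₁ = τ₁ ∧ σ₂ = τ₂ ∧ α₁₁ = β₁₁ ∧ α₂₂ = β₂₂ := by
    have hF := tendsto_zero_of_summable_sphHarmDim_mul hd
      (fun l => Finset.sum_nonneg fun i _ => Finset.sum_nonneg fun j _ => sq_nonneg _) h
    have hc (l : ℕ) : (Nat.choose (d + l - 2) l : ℝ) ≠ 0 :=
      Nat.cast_ne_zero.2 (Nat.choose_pos (by omega)).ne'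
    obtain ⟨h₁, h₁₁⟩ := marginal_eq_of_tendsto_ratio hσ₁ hτ₁ hα₁₁ hβ₁₁ hc
      (by simpa [hssq, hb1, hb2] using tendsto_div_diag_of_tendsto_sum_sq hs hF 0)
    obtain ⟨h₂, h₂₂⟩ := marginal_eq_of_tendsto_ratio hσ₂ hτ₂ hα₂₂ hβ₂₂ hc
      (by simpa [hssq, hb1, hb2] using tendsto_div_diag_of_tendsto_sum_sq hs hF 1)
    exact ⟨h₁, h₂, h₁₁, h₂₂⟩
  constructor
  · intro h
    obtain ⟨rfl, rfl, rfl, rfl⟩ := hmarginals h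
    exact ⟨rfl, rfl, rfl, rfl, (summable_iff_of_marginals_eq hd hσ₁ hσ₂ hα₁₁ hα₂₂ hα₁₂ hρ.1 hβ₁₂
      hϱ.1 hcross₁ hcross₂ hρbound hb1 hb2 hs hssq).1 h⟩
  · rintro ⟨rfl, rfl, rfl, rfl, h⟩
    exact (summable_iff_of_marginals_eq hd hσ₁ hσ₂ hα₁₁ hα₂₂ hα₁₂ hρ.1 hβ₁₂ hϱ.1 hcross₁ hcross₂
      hρbound hb1 hb2 hs hssq).2 h

/-- Equivalence criterion for two bivariate multiquadratic models on the
`d`-sphere.  Field `j = 1` has parameters `(σ₁, σ₂, α₁₁, α₂₂, α₁₂, ρ)` and field `j = 2`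
has parameters `(τ₁, τ₂, β₁₁, β₂₂, β₁₂, ϱ)`, each satisfying the validity conditions; the
matrices `b1 l`, `b2 l` are the corresponding matrix-valued `d`-Schoenberg coefficients and
`s l` is the symmetric positive definite square root of `b1 l` (so `(b1 l)^{-1/2} = (s l)⁻¹`).
Then `∑_l h(l) ‖(b1 l)^{-1/2} (b2 l) (b1 l)^{-1/2} − I‖_F² < ∞` iff the marginal parameters
coincide (`σᵢ = τᵢ`, `αᵢᵢ = βᵢᵢ`) and either both cross parameters are strictly below
`√(α₁₁ α₂₂)`, or the cross parameters coincide (`α₁₂ = β₁₂` and `ρ = ϱ`). -/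
theorem multiquadratic_equivalence_iff
    (d : ℕ) (hd : 2 ≤ d)
    (σ₁ σ₂ α₁₁ α₂₂ α₁₂ ρ : ℝ)
    (τ₁ τ₂ β₁₁ β₂₂ β₁₂ ϱ : ℝ)
    (hσ₁ : 0 < σ₁) (hσ₂ : 0 < σ₂) (hτ₁ : 0 < τ₁) (hτ₂ : 0 < τ₂)
    (hα₁₁ : α₁₁ ∈ Set.Ioo (0 : ℝ) 1) (hα₂₂ : α₂₂ ∈ Set.Ioo (0 : ℝ) 1)
    (hα₁₂ : α₁₂ ∈ Set.Ioo (0 : ℝ) 1) (hρ : ρ ∈ Set.Ioo (0 : ℝ) 1)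
    (hβ₁₁ : β₁₁ ∈ Set.Ioo (0 : ℝ) 1) (hβ₂₂ : β₂₂ ∈ Set.Ioo (0 : ℝ) 1)
    (hβ₁₂ : β₁₂ ∈ Set.Ioo (0 : ℝ) 1) (hϱ : ϱ ∈ Set.Ioo (0 : ℝ) 1)
    (hcross₁ : α₁₂ ≤ Real.sqrt (α₁₁ * α₂₂))
    (hcross₂ : β₁₂ ≤ Real.sqrt (β₁₁ * β₂₂))
    (hρbound : ρ < ((1 - α₁₁) * (1 - α₂₂) / (1 - α₁₂) ^ 2) ^ (((d : ℝ) - 1) / 2))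
    (hϱbound : ϱ < ((1 - β₁₁) * (1 - β₂₂) / (1 - β₁₂) ^ 2) ^ (((d : ℝ) - 1) / 2))
    (b1 b2 : ℕ → Matrix (Fin 2) (Fin 2) ℝ)
    (hb1 : ∀ l : ℕ, b1 l =
      !![σ₁ ^ 2 * (Nat.choose (d + l - 2) l) * α₁₁ ^ l * (1 - α₁₁) ^ (d - 1),
         ρ * σ₁ * σ₂ * (Nat.choose (d + l - 2) l) * α₁₂ ^ l * (1 - α₁₂) ^ (d - 1);
         ρ * σ₁ * σ₂ * (Nat.choose (d + l - 2) l) * α₁₂ ^ l * (1 - α₁₂) ^ (d - 1),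
         σ₂ ^ 2 * (Nat.choose (d + l - 2) l) * α₂₂ ^ l * (1 - α₂₂) ^ (d - 1)])
    (hb2 : ∀ l : ℕ, b2 l =
      !![τ₁ ^ 2 * (Nat.choose (d + l - 2) l) * β₁₁ ^ l * (1 - β₁₁) ^ (d - 1),
         ϱ * τ₁ * τ₂ * (Nat.choose (d + l - 2) l) * β₁₂ ^ l * (1 - β₁₂) ^ (d - 1);
         ϱ * τ₁ * τ₂ * (Nat.choose (d + l - 2) l) * β₁₂ ^ l * (1 - β₁₂) ^ (d - 1),
         τ₂ ^ 2 * (Nat.choose (d + l - 2) l) * β₂₂ ^ l * (1 - β₂₂) ^ (d - 1)])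
    (s : ℕ → Matrix (Fin 2) (Fin 2) ℝ)
    (hs : ∀ l, (s l).PosDef)
    (hssq : ∀ l, s l * s l = b1 l) :
    Summable (fun l : ℕ => (sphHarmDim d l : ℝ) *
        ∑ i : Fin 2, ∑ j : Fin 2, (((s l)⁻¹ * b2 l * (s l)⁻¹ - 1) i j) ^ 2)
      ↔ (σ₁ = τ₁ ∧ σ₂ = τ₂ ∧ α₁₁ = β₁₁ ∧ α₂₂ = β₂₂ ∧
          ((α₁₂ < Real.sqrt (α₁₁ * α₂₂) ∧ β₁₂ < Real.sqrt (α₁₁ * α₂₂)) ∨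
            (α₁₂ = β₁₂ ∧ ρ = ϱ))) :=
  multiquadratic_equivalence_iff_general d hd σ₁ σ₂ α₁₁ α₂₂ α₁₂ ρ τ₁ τ₂ β₁₁ β₂₂ β₁₂ ϱ hσ₁ hσ₂ hτ₁
    hτ₂ hα₁₁ hα₂₂ hα₁₂ hρ hβ₁₁ hβ₂₂ hβ₁₂ hϱ hcross₁ hcross₂ hρbound b1 b2 hb1 hb2 s hs hssq
end

section
/- Let σ₁, σ₂, α₁, α₂, ν₁, ν₂ be strictly positive real numbers. Then the double series Σ_{l=0}^∞ Σ_{k=0}^∞ (2l+1) · ( (σ₂/σ₁)² · (α₁ + k² + l²)^{ν₁ + 1/2} / (α₂ + k² + l²)^{ν₂ + 1/2} − 1 )² converges if and only if σ₁ = σ₂ and ν₁ = ν₂. -/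
/-!
Along the diagonal `k = 0` the summands dominate `(c (α₁ + l²)^a / (α₂ + l²)^b - 1)²`, with
`c = (σ₂/σ₁)²`, `a = ν₁ + 1/2`, `b = ν₂ + 1/2`, so this ratio tends to `1`. As
`(α₁ + l²)/(α₂ + l²) → 1`, the factor `c (α₁ + l²)^(a - b)` tends to `1` as well, which is only
possible if `a = b` and `c = 1`.

Conversely, if `c = 1` and `a = b`, the ratio `t = (α₁ + k² + l²)/(α₂ + k² + l²)` satisfies
`t - 1 = (α₁ - α₂)/(α₂ + k² + l²)`, and `t ↦ t^a` is differentiable at `1`, so the summand is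
`O((2l + 1)/(α₂ + k² + l²)²)`. The bound `(α₂ + k² + l²)² ≥ (α₂ + l²)^(5/4) (α₂ + k²)^(3/4)`
splits this majorant into a product of two convergent series.
-/

open Filter Topology Asymptotics

lemma rpow_neg_add_sq_le {α : ℝ} (hα : 0 ≤ α) {s : ℝ} (hs : 0 ≤ s) {n : ℕ} (hn : 1 ≤ n) :
    (α + (n : ℝ) ^ 2) ^ (-s) ≤ (n : ℝ) ^ (-(2 * s)) := by
  have hn' : (0 : ℝ) < n := by exact_mod_cast hn
  calc (α + (n : ℝ) ^ 2) ^ (-s) ≤ ((n : ℝ) ^ 2) ^ (-s) :=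
        Real.rpow_le_rpow_of_nonpos (by positivity) (by linarith) (by linarith)
    _ = (n : ℝ) ^ (-(2 * s)) := by
        rw [← Real.rpow_natCast, ← Real.rpow_mul hn'.le]
        ring_nf

lemma summable_add_sq_rpow_neg {α : ℝ} (hα : 0 < α) {s : ℝ} (hs : 1 / 2 < s) :
    Summable fun n : ℕ => (α + (n : ℝ) ^ 2) ^ (-s) := by
  refine .of_norm_bounded_eventually_nat
    (Real.summable_nat_rpow.2 (by linarith : -(2 * s) < -1)) ?_
  filter_upwards [eventually_ge_atTop 1] with n hn
  rw [Real.norm_of_nonneg (by positivity)]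
  exact rpow_neg_add_sq_le hα.le (by linarith) hn

lemma summable_mul_add_sq_rpow_neg {α : ℝ} (hα : 0 < α) {s : ℝ} (hs : 1 < s) :
    Summable fun n : ℕ => (2 * (n : ℝ) + 1) * (α + (n : ℝ) ^ 2) ^ (-s) := by
  refine .of_norm_bounded_eventually_nat
    ((summable_add_sq_rpow_neg hα (by linarith : 1 / 2 < s - 1 / 2)).mul_left 3) ?_
  filter_upwards [eventually_ge_atTop 1] with n hn
  have hv : 0 < α + (n : ℝ) ^ 2 := by positivity
  have hweight : 2 * (n : ℝ) + 1 ≤ 3 * (α + (n : ℝ) ^ 2) ^ (1 / 2 : ℝ) := by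
    have hn' : (1 : ℝ) ≤ n := by exact_mod_cast hn
    rw [← Real.sqrt_eq_rpow]
    nlinarith [Real.le_sqrt_of_sq_le (show (n : ℝ) ^ 2 ≤ α + (n : ℝ) ^ 2 by linarith)]
  rw [Real.norm_of_nonneg (by positivity)]
  calc (2 * (n : ℝ) + 1) * (α + (n : ℝ) ^ 2) ^ (-s)
      ≤ 3 * (α + (n : ℝ) ^ 2) ^ (1 / 2 : ℝ) * (α + (n : ℝ) ^ 2) ^ (-s) := by gcongr
    _ = 3 * (α + (n : ℝ) ^ 2) ^ (-(s - 1 / 2)) := by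
        rw [mul_assoc, ← Real.rpow_add hv]
        ring_nf

lemma rpow_mul_rpow_le_rpow_add {x y w p q : ℝ} (hx : 0 ≤ x) (hy : 0 ≤ y) (hw : 0 < w)
    (hxw : x ≤ w) (hyw : y ≤ w) (hp : 0 ≤ p) (hq : 0 ≤ q) : x ^ p * y ^ q ≤ w ^ (p + q) := by
  rw [Real.rpow_add hw]
  gcongr

lemma summable_mul_inv_add_sq_add_sq_sq {α : ℝ} (hα : 0 < α) :
    Summable fun p : ℕ × ℕ =>
      (2 * (p.1 : ℝ) + 1) * ((α + (p.2 : ℝ) ^ 2 + (p.1 : ℝ) ^ 2) ^ 2)⁻¹ := by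
  refine .of_nonneg_of_le (fun p => by positivity) (fun p => ?_)
    ((summable_mul_add_sq_rpow_neg hα (by norm_num : (1 : ℝ) < 5 / 4)).mul_of_nonneg
      (summable_add_sq_rpow_neg hα (by norm_num : (1 / 2 : ℝ) < 3 / 4))
      (fun _ => by positivity) (fun _ => by positivity))
  have hl : 0 < α + (p.1 : ℝ) ^ 2 := by positivity
  have hk : 0 < α + (p.2 : ℝ) ^ 2 := by positivity
  have hmean := rpow_mul_rpow_le_rpow_add hl.le hk.le
    (by positivity : 0 < α + (p.2 : ℝ) ^ 2 + (p.1 : ℝ) ^ 2) (by nlinarith) (by nlinarith)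
    (by norm_num : (0 : ℝ) ≤ 5 / 4) (by norm_num : (0 : ℝ) ≤ 3 / 4)
  rw [show (5 / 4 + 3 / 4 : ℝ) = (2 : ℕ) by norm_num, Real.rpow_natCast] at hmean
  rw [mul_assoc]
  gcongr
  rw [Real.rpow_neg hl.le, Real.rpow_neg hk.le, ← mul_inv]
  exact inv_anti₀ (by positivity) hmean

lemma tendsto_cofinite_sq_add_sq :
    Tendsto (fun p : ℕ × ℕ => (p.2 : ℝ) ^ 2 + (p.1 : ℝ) ^ 2) cofinite atTop := by
  refine tendsto_atTop.2 fun b => eventually_cofinite.2 <|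
    ((Set.finite_Iio ⌈b⌉₊).prod (Set.finite_Iio ⌈b⌉₊)).subset fun p hp => ?_
  replace hp : (p.2 : ℝ) ^ 2 + (p.1 : ℝ) ^ 2 < b := not_le.1 hp
  have h1 : (p.1 : ℝ) ≤ (p.1 : ℝ) ^ 2 := by exact_mod_cast Nat.le_self_pow two_ne_zero p.1
  have h2 : (p.2 : ℝ) ≤ (p.2 : ℝ) ^ 2 := by exact_mod_cast Nat.le_self_pow two_ne_zero p.2
  constructor <;> simp only [Set.mem_Iio, Nat.lt_ceil] <;> nlinarith

lemma tendsto_cofinite_of_summable_mul_sq_sub {ι : Type*} {ρ f : ι → ℝ} {c : ℝ}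
    (hρ : ∀ i, 1 ≤ ρ i) (h : Summable fun i => ρ i * (f i - c) ^ 2) :
    Tendsto f cofinite (𝓝 c) := by
  have hsq : Tendsto (fun i => (f i - c) ^ 2) cofinite (𝓝 0) :=
    squeeze_zero (fun i => sq_nonneg _)
      (fun i => le_mul_of_one_le_left (sq_nonneg _) (hρ i)) h.tendsto_cofinite_zero
  rw [tendsto_iff_norm_sub_tendsto_zero]
  simpa [Real.sqrt_sq_eq_abs] using hsq.sqrt

section RatioAtInfinity

variable {ι : Type*} {l : Filter ι} {w : ι → ℝ}

lemma tendsto_add_div_add_nhds_one (hw : Tendsto w l atTop) (α₁ α₂ : ℝ) :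
    Tendsto (fun x => (α₁ + w x) / (α₂ + w x)) l (𝓝 1) := by
  have hv := tendsto_atTop_add_const_left l α₂ hw
  have h : Tendsto (fun x => 1 + (α₁ - α₂) / (α₂ + w x)) l (𝓝 (1 + 0)) :=
    tendsto_const_nhds.add (hv.const_div_atTop _)
  rw [add_zero] at h
  refine h.congr' ?_
  filter_upwards [hv.eventually_gt_atTop 0] with x hx
  field_simp
  ring

lemma isBigO_rpow_div_rpow_sub_one (hw : Tendsto w l atTop) (α₁ α₂ a : ℝ) :
    (fun x => (α₁ + w x) ^ a / (α₂ + w x) ^ a - 1) =O[l] fun x => (α₂ + w x)⁻¹ := by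
  have hv := tendsto_atTop_add_const_left l α₂ hw
  have hderiv : (fun t : ℝ => t ^ a - 1) =O[𝓝 1] fun t => t - 1 := by
    simpa using (Real.hasDerivAt_rpow_const (p := a) (Or.inl one_ne_zero)).isBigO_sub
  have hpow : (fun x => (α₁ + w x) ^ a / (α₂ + w x) ^ a - 1) =ᶠ[l]
      fun x => ((α₁ + w x) / (α₂ + w x)) ^ a - 1 := by
    filter_upwards [(tendsto_atTop_add_const_left l α₁ hw).eventually_ge_atTop 0,
      hv.eventually_ge_atTop 0] with x hux hvx
    rw [Real.div_rpow hux hvx]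
  have hsub : (fun x => (α₁ + w x) / (α₂ + w x) - 1) =ᶠ[l]
      fun x => (α₁ - α₂) * (α₂ + w x)⁻¹ := by
    filter_upwards [hv.eventually_gt_atTop 0] with x hx
    field_simp
    ring
  exact ((hderiv.comp_tendsto (tendsto_add_div_add_nhds_one hw α₁ α₂)).congr' hpow.symm
    hsub).trans ((isBigO_refl _ _).const_mul_left _)

lemma eq_zero_of_tendsto_rpow [l.NeBot] (hw : Tendsto w l atTop) {r L : ℝ} (hL : L ≠ 0)
    (h : Tendsto (fun x => w x ^ r) l (𝓝 L)) : r = 0 := by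
  rcases lt_trichotomy r 0 with hr | hr | hr
  · have h0 : Tendsto (fun x => w x ^ r) l (𝓝 0) := by
      simpa [Function.comp_def] using (tendsto_rpow_neg_atTop (neg_pos.2 hr)).comp hw
    exact absurd (tendsto_nhds_unique h h0) hL
  · exact hr
  · exact absurd h (not_tendsto_nhds_of_tendsto_atTop ((tendsto_rpow_atTop hr).comp hw) L)

lemma eq_of_tendsto_mul_rpow_div_rpow [l.NeBot] (hw : Tendsto w l atTop) {α₁ α₂ c a b : ℝ}
    (h : Tendsto (fun x => c * (α₁ + w x) ^ a / (α₂ + w x) ^ b) l (𝓝 1)) : c = 1 ∧ a = b := by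
  have hu := tendsto_atTop_add_const_left l α₁ hw
  have hv := tendsto_atTop_add_const_left l α₂ hw
  have hratio : Tendsto (fun x => ((α₁ + w x) / (α₂ + w x)) ^ b) l (𝓝 1) := by
    simpa [Function.comp_def] using
      (Real.continuousAt_rpow_const 1 b (Or.inl one_ne_zero)).tendsto.comp
        (tendsto_add_div_add_nhds_one hw α₁ α₂)
  have hc : Tendsto (fun x => c * (α₁ + w x) ^ (a - b)) l (𝓝 1) := by
    have hdiv := h.div hratio one_ne_zero
    rw [div_one] at hdiv
    refine hdiv.congr' ?_
    filter_upwards [hu.eventually_gt_atTop 0, hv.eventually_gt_atTop 0] with x hux hvx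
    rw [Pi.div_apply, Real.div_rpow hux.le hvx.le, Real.rpow_sub hux]
    field_simp
  have hc0 : c ≠ 0 := by
    rintro rfl
    simp at hc
  have hab : a - b = 0 := eq_zero_of_tendsto_rpow hu (inv_ne_zero hc0) <| by
    simpa [hc0] using hc.const_mul c⁻¹
  refine ⟨?_, sub_eq_zero.1 hab⟩
  simp only [hab, Real.rpow_zero, mul_one] at hc
  exact tendsto_nhds_unique tendsto_const_nhds hc

end RatioAtInfinity

theorem legendre_matern_equivalence_iff_general
    (σ₁ σ₂ α₁ α₂ ν₁ ν₂ : ℝ)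
    (hσ₁ : 0 < σ₁) (hσ₂ : 0 < σ₂) (hα₂ : 0 < α₂) :
    Summable (fun p : ℕ × ℕ =>
        (2 * (p.1 : ℝ) + 1) *
          ((σ₂ / σ₁) ^ 2 *
              (α₁ + (p.2 : ℝ) ^ 2 + (p.1 : ℝ) ^ 2) ^ (ν₁ + 1 / 2) /
              (α₂ + (p.2 : ℝ) ^ 2 + (p.1 : ℝ) ^ 2) ^ (ν₂ + 1 / 2) - 1) ^ 2)
      ↔ (σ₁ = σ₂ ∧ ν₁ = ν₂) := by
  constructor
  · intro h
    have hweight (p : ℕ × ℕ) : 1 ≤ 2 * (p.1 : ℝ) + 1 := by linarith [p.1.cast_nonneg (α := ℝ)]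
    have hdiag : Tendsto (fun n : ℕ => (σ₂ / σ₁) ^ 2 * (α₁ + (n : ℝ) ^ 2) ^ (ν₁ + 1 / 2) /
        (α₂ + (n : ℝ) ^ 2) ^ (ν₂ + 1 / 2)) atTop (𝓝 1) := by
      simpa [Nat.cofinite_eq_atTop, Function.comp_def] using
        (tendsto_cofinite_of_summable_mul_sq_sub hweight h).comp
          (Prod.mk_left_injective 0).tendsto_cofinite
    obtain ⟨hσ, hν⟩ := eq_of_tendsto_mul_rpow_div_rpow
      ((tendsto_pow_atTop two_ne_zero).comp tendsto_natCast_atTop_atTop) hdiag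
    rw [pow_eq_one_iff_of_nonneg (by positivity) two_ne_zero, div_eq_one_iff_eq hσ₁.ne'] at hσ
    exact ⟨hσ.symm, by linarith⟩
  · rintro ⟨rfl, rfl⟩
    have hO := isBigO_rpow_div_rpow_sub_one tendsto_cofinite_sq_add_sq α₁ α₂ (ν₁ + 1 / 2)
    refine summable_of_isBigO (summable_mul_inv_add_sq_add_sq_sq hα₂) ?_
    simpa [add_assoc, div_self hσ₁.ne', inv_pow] using
      (isBigO_refl (fun p : ℕ × ℕ => 2 * (p.1 : ℝ) + 1) _).mul (hO.pow 2)

/-- Feldman–Hájek equivalence criterion for the Legendre–Matérn model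
on the 2-sphere with values in `L²([0,1])`: the double series
`∑_{l,k} (2l+1) ((σ₂/σ₁)² (α₁+k²+l²)^{ν₁+1/2}/(α₂+k²+l²)^{ν₂+1/2} − 1)²`
converges if and only if `σ₁ = σ₂` and `ν₁ = ν₂`.  (All powers are real powers.) -/
theorem legendre_matern_equivalence_iff
    (σ₁ σ₂ α₁ α₂ ν₁ ν₂ : ℝ)
    (hσ₁ : 0 < σ₁) (hσ₂ : 0 < σ₂) (hα₁ : 0 < α₁) (hα₂ : 0 < α₂)
    (hν₁ : 0 < ν₁) (hν₂ : 0 < ν₂) :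
    Summable (fun p : ℕ × ℕ =>
        (2 * (p.1 : ℝ) + 1) *
          ((σ₂ / σ₁) ^ 2 *
              (α₁ + (p.2 : ℝ) ^ 2 + (p.1 : ℝ) ^ 2) ^ (ν₁ + 1 / 2) /
              (α₂ + (p.2 : ℝ) ^ 2 + (p.1 : ℝ) ^ 2) ^ (ν₂ + 1 / 2) - 1) ^ 2)
      ↔ (σ₁ = σ₂ ∧ ν₁ = ν₂) :=
  legendre_matern_equivalence_iff_general σ₁ σ₂ α₁ α₂ ν₁ ν₂ hσ₁ hσ₂ hα₂
end

section
/- Let ν, α₁, α₂ be strictly positive real numbers. Then the double series Σ_{l=0}^∞ Σ_{k=0}^∞ (2l+1) · ( ( (α₁ + k² + l²) / (α₂ + k² + l²) )^{ν + 1/2} − 1 )² converges. -/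
/-!
With `D = α₂ + k² + l²` the ratio `r = (α₁ + k² + l²) / D` satisfies `r - 1 = (α₁ - α₂) / D → 0`,
and `x ↦ x ^ s` is differentiable at `1`, so the general term is `O((2l + 1) / D²)`. The bound
`x ^ (3/2) * y ^ (5/2) ≤ (x² + y²)²` dominates `(2l + 1) / D²` by a multiple of
`(k + 1) ^ (-3/2) * (l + 1) ^ (-3/2)`, a product of two convergent `p`-series.
-/

open Filter Asymptotics Topology

lemma Real.rpow_sub_one_isBigO (s : ℝ) : (fun x : ℝ => x ^ s - 1) =O[𝓝 1] (fun x => x - 1) := by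
  simpa using (Real.hasDerivAt_rpow_const (p := s) (Or.inl one_ne_zero)).isBigO_sub

lemma Real.rpow_mul_rpow_le_add_rpow_add {x y a b : ℝ} (hx : 0 ≤ x) (hy : 0 ≤ y) (ha : 0 ≤ a)
    (hb : 0 ≤ b) : x ^ a * y ^ b ≤ (x + y) ^ (a + b) := by
  rcases (add_nonneg ha hb).eq_or_lt with hab | hab
  · obtain ⟨rfl, rfl⟩ : a = 0 ∧ b = 0 := ⟨by linarith, by linarith⟩
    simp
  rw [Real.rpow_add' (by positivity) hab.ne']
  gcongr <;> linarith

lemma div_sq_add_sq_sq_le_rpow_mul_rpow {x y : ℝ} (hx : 0 < x) (hy : 0 < y) :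
    y / (x ^ 2 + y ^ 2) ^ 2 ≤ x ^ (-(3 / 2) : ℝ) * y ^ (-(3 / 2) : ℝ) := by
  have key : x ^ (3 / 2 : ℝ) * y ^ (5 / 2 : ℝ) ≤ (x ^ 2 + y ^ 2) ^ 2 := by
    have h := Real.rpow_mul_rpow_le_add_rpow_add (sq_nonneg x) (sq_nonneg y)
      (by norm_num : (0 : ℝ) ≤ 3 / 4) (by norm_num : (0 : ℝ) ≤ 5 / 4)
    rw [← Real.rpow_natCast_mul hx.le, ← Real.rpow_natCast_mul hy.le,
      show (3 / 4 + 5 / 4 : ℝ) = (2 : ℕ) by norm_num, Real.rpow_natCast] at h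
    convert h using 3 <;> norm_num
  rw [div_le_iff₀ (by positivity)]
  calc y = x ^ (-(3 / 2) : ℝ) * y ^ (-(3 / 2) : ℝ) * (x ^ (3 / 2 : ℝ) * y ^ (5 / 2 : ℝ)) := by
        rw [mul_mul_mul_comm, ← Real.rpow_add hx, ← Real.rpow_add hy]
        norm_num
    _ ≤ _ := by gcongr

lemma Real.summable_nat_add_one_rpow {p : ℝ} (hp : p < -1) :
    Summable (fun n : ℕ => ((n : ℝ) + 1) ^ p) := by
  simpa using (summable_nat_add_iff 1).mpr (Real.summable_nat_rpow.mpr hp)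

lemma tendsto_add_natCast_sq_add_sq_cofinite (α : ℝ) :
    Tendsto (fun p : ℕ × ℕ => α + (p.2 : ℝ) ^ 2 + (p.1 : ℝ) ^ 2) cofinite atTop := by
  have hsum : Tendsto (fun p : ℕ × ℕ => p.1 + p.2) cofinite atTop := by
    rw [← Nat.cofinite_eq_atTop]
    exact Tendsto.cofinite_of_finite_preimage_singleton fun n =>
      (Finset.HasAntidiagonal.antidiagonal n).finite_toSet.subset fun p hp => by simpa using hp
  refine tendsto_atTop_mono (fun p => ?_)
    (tendsto_atTop_add_const_left _ α (tendsto_natCast_atTop_atTop.comp hsum))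
  have h1 : (p.1 : ℝ) ≤ (p.1 : ℝ) ^ 2 := by exact_mod_cast Nat.le_self_pow two_ne_zero p.1
  have h2 : (p.2 : ℝ) ≤ (p.2 : ℝ) ^ 2 := by exact_mod_cast Nat.le_self_pow two_ne_zero p.2
  simp only [Function.comp, Nat.cast_add]
  linarith

lemma summable_two_mul_add_one_div_add_sq_add_sq_sq {α : ℝ} (hα : 0 < α) :
    Summable (fun p : ℕ × ℕ =>
      (2 * (p.1 : ℝ) + 1) / (α + (p.2 : ℝ) ^ 2 + (p.1 : ℝ) ^ 2) ^ 2) := by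
  set c := min (1 / 2) (α / 4)
  have hc : 0 < c := by positivity
  have hprod := Real.summable_nat_add_one_rpow (p := -(3 / 2)) (by norm_num)
  refine Summable.of_nonneg_of_le (fun p => by positivity) (fun p => ?_)
    ((hprod.mul_of_nonneg hprod (fun _ => by positivity) (fun _ => by positivity)).mul_left
      (2 / c ^ 2))
  obtain ⟨l, k⟩ := p
  have hD : c * (((k : ℝ) + 1) ^ 2 + ((l : ℝ) + 1) ^ 2) ≤ α + (k : ℝ) ^ 2 + (l : ℝ) ^ 2 := by
    have : c ≤ 1 / 2 := min_le_left _ _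
    have : c ≤ α / 4 := min_le_right _ _
    nlinarith [sq_nonneg ((k : ℝ) - 1), sq_nonneg ((l : ℝ) - 1)]
  calc (2 * (l : ℝ) + 1) / (α + (k : ℝ) ^ 2 + (l : ℝ) ^ 2) ^ 2
      ≤ 2 * ((l : ℝ) + 1) / (c * (((k : ℝ) + 1) ^ 2 + ((l : ℝ) + 1) ^ 2)) ^ 2 := by
        gcongr; linarith
    _ = 2 / c ^ 2 * (((l : ℝ) + 1) / (((k : ℝ) + 1) ^ 2 + ((l : ℝ) + 1) ^ 2) ^ 2) := by
        field_simp
    _ ≤ _ := by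
        gcongr
        exact (div_sq_add_sq_sq_le_rpow_mul_rpow (by positivity) (by positivity)).trans_eq
          (mul_comm _ _)

theorem legendre_matern_same_nu_summable_general
    (ν α₁ α₂ : ℝ)
    (hα₂ : 0 < α₂) :
    Summable (fun p : ℕ × ℕ =>
        (2 * (p.1 : ℝ) + 1) *
          (((α₁ + (p.2 : ℝ) ^ 2 + (p.1 : ℝ) ^ 2) /
              (α₂ + (p.2 : ℝ) ^ 2 + (p.1 : ℝ) ^ 2)) ^ (ν + 1 / 2) - 1) ^ 2) := by
  have hD : ∀ p : ℕ × ℕ, α₂ + (p.2 : ℝ) ^ 2 + (p.1 : ℝ) ^ 2 ≠ 0 := fun p => by positivity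
  have hr_sub_one : ∀ p : ℕ × ℕ,
      (α₁ + (p.2 : ℝ) ^ 2 + (p.1 : ℝ) ^ 2) / (α₂ + (p.2 : ℝ) ^ 2 + (p.1 : ℝ) ^ 2) - 1 =
        (α₁ - α₂) / (α₂ + (p.2 : ℝ) ^ 2 + (p.1 : ℝ) ^ 2) := fun p => by
    rw [div_sub_one (hD p)]
    ring
  have hr : Tendsto (fun p : ℕ × ℕ =>
      (α₁ + (p.2 : ℝ) ^ 2 + (p.1 : ℝ) ^ 2) / (α₂ + (p.2 : ℝ) ^ 2 + (p.1 : ℝ) ^ 2)) cofinite (𝓝 1) :=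
    tendsto_sub_nhds_zero_iff.mp <| by
      simpa only [hr_sub_one] using
        (tendsto_add_natCast_sq_add_sq_cofinite α₂).const_div_atTop (α₁ - α₂)
  have hO := ((Real.rpow_sub_one_isBigO (ν + 1 / 2)).comp_tendsto hr).pow 2
  refine summable_of_isBigO
    ((summable_two_mul_add_one_div_add_sq_add_sq_sq hα₂).mul_left ((α₁ - α₂) ^ 2)) ?_
  refine ((isBigO_refl (fun p : ℕ × ℕ => 2 * (p.1 : ℝ) + 1) _).mul hO).congr_right fun p => ?_
  simp only [Function.comp_apply, hr_sub_one, div_pow]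
  ring

/-- Sufficiency part of the Legendre–Matérn equivalence criterion:
for `ν, α₁, α₂ > 0` the double series
`∑_{l,k} (2l+1) (((α₁+k²+l²)/(α₂+k²+l²))^{ν+1/2} − 1)²` converges.
(All powers are real powers.) -/
theorem legendre_matern_same_nu_summable
    (ν α₁ α₂ : ℝ)
    (hν : 0 < ν) (hα₁ : 0 < α₁) (hα₂ : 0 < α₂) :
    Summable (fun p : ℕ × ℕ =>
        (2 * (p.1 : ℝ) + 1) *
          (((α₁ + (p.2 : ℝ) ^ 2 + (p.1 : ℝ) ^ 2) /
              (α₂ + (p.2 : ℝ) ^ 2 + (p.1 : ℝ) ^ 2)) ^ (ν + 1 / 2) - 1) ^ 2) :=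
  legendre_matern_same_nu_summable_general ν α₁ α₂ hα₂
end
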